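/- arXiv:1404.6686 — 12 statements merged into one kernel-verified Lean document; each statement's English description precedes it below -/
import Mathlib

section
/- Let X be a metric (or Hausdorff) space, f : X → X continuous, and x ∈ X a recurrent point (x ∈ ω_f(x)). If ω_f(x) contains a point that is isolated in the closure of the orbit O_f(x), then x is periodic. -/
open Filter Topology

theorem stmt_4 {X : Type*} [MetricSpace X]
    (f : X → X) (hf : Continuous f) (x : X)
    (hrec : ∃ φ : ℕ → ℕ, StrictMono φ ∧
      Filter.Tendsto (fun k => f^[φ k] x) Filter.atTop (𝓝 x))
    (hiso : ∃ y : X,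
      (∃ φ : ℕ → ℕ, StrictMono φ ∧
        Filter.Tendsto (fun k => f^[φ k] x) Filter.atTop (𝓝 y)) ∧
      ∃ U : Set X, IsOpen U ∧
        U ∩ closure (Set.range fun k => f^[k] x) = {y}) :
    ∃ n : ℕ, 1 ≤ n ∧ f^[n] x = x := by
  obtain ⟨φ, hφ, hlim⟩ := hrec
  obtain ⟨y, ⟨ψ, hψ, hylim⟩, U, hU, hUy⟩ := hiso
  have hyU : y ∈ U := by
    have : y ∈ U ∩ closure (Set.range fun k => f^[k] x) := by rw [hUy]; rfl
    exact this.1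
  have horb : ∀ k : ℕ, f^[ψ k] x ∈ closure (Set.range fun k => f^[k] x) :=
    fun k => subset_closure ⟨ψ k, rfl⟩
  have hev : ∀ᶠ k in atTop, f^[ψ k] x = y := by
    filter_upwards [hylim (hU.mem_nhds hyU)] with k hk
    have h2 : f^[ψ k] x ∈ U ∩ closure (Set.range fun k => f^[k] x) := ⟨hk, horb k⟩
    rw [hUy] at h2; exact h2
  obtain ⟨N, hN⟩ := eventually_atTop.mp hev
  set m := ψ N with hm
  set p := ψ (N + 1) - ψ N with hp
  have hp1 : 1 ≤ p := by
    have := hψ (show N < N + 1 by omega)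
    omega
  have hmp : f^[m + p] x = f^[m] x := by
    have h1 : m + p = ψ (N + 1) := by
      have := hψ (show N < N + 1 by omega); omega
    rw [h1, hN (N + 1) (Nat.le_succ N), hN N le_rfl]
  -- periodicity on the tail
  have hper : ∀ j : ℕ, f^[m + j * p] x = f^[m] x := by
    intro j
    induction j with
    | zero => simp
    | succ j ih =>
      have : m + (j + 1) * p = p + (m + j * p) := by ring
      rw [this, Function.iterate_add_apply, ih, ← Function.iterate_add_apply]
      rw [show p + m = m + p by ring, hmp]
  have key : ∀ n, m ≤ n → ∃ r < p, f^[n] x = f^[m + r] x := by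
    intro n hn
    refine ⟨(n - m) % p, Nat.mod_lt _ hp1, ?_⟩
    have hd := Nat.div_add_mod (n - m) p
    rw [Nat.mul_comm] at hd
    have hne : n = (n - m) % p + (m + (n - m) / p * p) := by omega
    conv_lhs => rw [hne]
    rw [Function.iterate_add_apply, hper, ← Function.iterate_add_apply, Nat.add_comm]
  set C : Set X := (fun r => f^[m + r] x) '' Set.Iio p with hC
  have hCfin : C.Finite := (Set.finite_Iio p).image _
  have hxmem : ∀ᶠ k in atTop, f^[φ k] x ∈ C := by
    filter_upwards [eventually_ge_atTop m] with k hk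
    obtain ⟨r, hr, heq⟩ := key (φ k) (le_trans hk (hφ.le_apply))
    exact ⟨r, hr, heq.symm⟩
  have hxC : x ∈ C := hCfin.isClosed.mem_of_tendsto hlim hxmem
  have hC' : IsClosed (C \ {x}) := (hCfin.subset Set.diff_subset).isClosed
  have hnb : (C \ {x})ᶜ ∈ 𝓝 x :=
    hC'.isOpen_compl.mem_nhds (by simp)
  have hevx : ∀ᶠ k in atTop, f^[φ k] x = x := by
    filter_upwards [hxmem, hlim hnb] with k h1 h2
    by_contra h
    exact h2 ⟨h1, h⟩
  obtain ⟨M, hM⟩ := eventually_atTop.mp hevx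
  refine ⟨φ (M + 1), ?_, hM (M + 1) (Nat.le_succ M)⟩
  have h1 : M + 1 ≤ φ (M + 1) := hφ.le_apply
  omega
end

section
/- Let X be a compact metric space, f : X → X continuous, and x ∈ X with infinite orbit. If there exists a positive integer l and a point y such that f^{ln}(x) → y as n → ∞, then ω_f(x) = O_f(y) and f^l(y) = y. -/
/-!
Writing `f^[l * n + k] x = f^[k] (f^[l * n] x)`, continuity of `f^[k]` shows that
`f^[l * n + k] x → f^[k] y`; for `k = l` this forces `f^[l] y = y`, and it exhibits every point of
the orbit of `y` as an ω-limit point. Conversely, along a subsequence `φ` of exponents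
infinitely many `φ n` share a residue `r` modulo `l`, and along those `f^[φ n] x → f^[r] y`.
-/

open Filter Topology Function

section

variable {X : Type*} [TopologicalSpace X] {f : X → X} {x y : X} {l : ℕ}

theorem tendsto_iterate_mul_add (hf : Continuous f)
    (hconv : Tendsto (fun n => f^[l * n] x) atTop (𝓝 y)) (k : ℕ)
    {ι : Type*} {L : Filter ι} {q : ι → ℕ} (hq : Tendsto q L atTop) :
    Tendsto (fun i => f^[l * q i + k] x) L (𝓝 (f^[k] y)) := by
  refine (((hf.iterate k).tendsto y).comp (hconv.comp hq)).congr fun i => ?_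
  simp only [comp_apply, ← iterate_add_apply, add_comm k]

theorem iterate_eq_self_of_tendsto_iterate_mul [T2Space X] (hf : Continuous f)
    (hconv : Tendsto (fun n => f^[l * n] x) atTop (𝓝 y)) : f^[l] y = y :=
  tendsto_nhds_unique (tendsto_iterate_mul_add hf hconv l tendsto_id) <| by
    simpa only [comp_def, mul_add_one, id] using hconv.comp (tendsto_add_atTop_nat 1)

theorem exists_strictMono_tendsto_iterate_of_tendsto_iterate_mul (hf : Continuous f)
    (hl : 0 < l) (hconv : Tendsto (fun n => f^[l * n] x) atTop (𝓝 y)) (k : ℕ) :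
    ∃ φ : ℕ → ℕ, StrictMono φ ∧ Tendsto (fun n => f^[φ n] x) atTop (𝓝 (f^[k] y)) :=
  ⟨fun n => l * n + k, fun _ _ hab => Nat.add_lt_add_right ((Nat.mul_lt_mul_left hl).2 hab) k,
    tendsto_iterate_mul_add hf hconv k tendsto_id⟩

theorem exists_iterate_eq_of_tendsto_iterate_mul [T2Space X] (hf : Continuous f) (hl : 0 < l)
    (hconv : Tendsto (fun n => f^[l * n] x) atTop (𝓝 y)) {φ : ℕ → ℕ}
    (hφ : Tendsto φ atTop atTop) {z : X} (hz : Tendsto (fun n => f^[φ n] x) atTop (𝓝 z)) :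
    ∃ r, f^[r] y = z := by
  obtain ⟨r, hr⟩ : ∃ r : Fin l, ∃ᶠ n in atTop, φ n % l = r :=
    frequently_exists.1 <| .of_forall fun n => ⟨⟨φ n % l, Nat.mod_lt _ hl⟩, rfl⟩
  set L := atTop ⊓ 𝓟 {n | φ n % l = r}
  have : L.NeBot := frequently_iff_neBot.1 hr
  have hdiv : Tendsto (fun n => φ n / l) L atTop :=
    ((Nat.tendsto_div_const_atTop hl.ne').comp hφ).mono_left inf_le_left
  have hres : (fun n => f^[l * (φ n / l) + r] x) =ᶠ[L] fun n => f^[φ n] x :=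
    eventually_inf_principal.2 <| .of_forall fun n (hn : φ n % l = r) => by
      simp only [← hn, Nat.div_add_mod]
  exact ⟨r, tendsto_nhds_unique ((tendsto_iterate_mul_add hf hconv r hdiv).congr' hres)
    (hz.mono_left inf_le_left)⟩

end

theorem stmt_6_general {X : Type*} [MetricSpace X]
    (f : X → X) (hf : Continuous f) (x : X)
    (l : ℕ) (hl : 0 < l) (y : X)
    (hconv : Filter.Tendsto (fun n => f^[l * n] x) Filter.atTop (𝓝 y)) :
    {z : X | ∃ φ : ℕ → ℕ, StrictMono φ ∧
        Filter.Tendsto (fun k => f^[φ k] x) Filter.atTop (𝓝 z)} =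
      (Set.range fun k => f^[k] y) ∧ f^[l] y = y := by
  refine ⟨Set.Subset.antisymm ?_ ?_, iterate_eq_self_of_tendsto_iterate_mul hf hconv⟩
  · rintro z ⟨φ, hφ, hz⟩
    exact exists_iterate_eq_of_tendsto_iterate_mul hf hl hconv hφ.tendsto_atTop hz
  · rintro _ ⟨k, rfl⟩
    exact exists_strictMono_tendsto_iterate_of_tendsto_iterate_mul hf hl hconv k

theorem stmt_6 {X : Type*} [MetricSpace X] [CompactSpace X]
    (f : X → X) (hf : Continuous f) (x : X)
    (hinf : (Set.range fun k => f^[k] x).Infinite)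
    (l : ℕ) (hl : 0 < l) (y : X)
    (hconv : Filter.Tendsto (fun n => f^[l * n] x) Filter.atTop (𝓝 y)) :
    {z : X | ∃ φ : ℕ → ℕ, StrictMono φ ∧
        Filter.Tendsto (fun k => f^[φ k] x) Filter.atTop (𝓝 z)} =
      (Set.range fun k => f^[k] y) ∧ f^[l] y = y :=
  stmt_6_general f hf x l hl y hconv
end

section
/- Let X be a compact metric space, f : X → X continuous, and x ∈ X with infinite orbit. If ω_f(x) = O_f(y) for some periodic point y of period l, then there exists i < l such that f^{ln}(x) → f^i(y) as n → ∞. -/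
open Filter Topology

theorem stmt_7 {X : Type*} [MetricSpace X] [CompactSpace X]
    (f : X → X) (hf : Continuous f) (x : X)
    (hinf : (Set.range fun k => f^[k] x).Infinite)
    (y : X) (l : ℕ) (hl : 0 < l)
    (hper : Function.IsPeriodicPt f l y) (hmin : Function.minimalPeriod f y = l)
    (homega : {z : X | ∃ φ : ℕ → ℕ, StrictMono φ ∧
        Filter.Tendsto (fun k => f^[φ k] x) Filter.atTop (𝓝 z)} =
      (Set.range fun k => f^[k] y)) :
    ∃ i < l, Filter.Tendsto (fun n => f^[l * n] x) Filter.atTop (𝓝 (f^[i] y)) := by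
  classical
  set u : ℕ → X := fun n => f^[l * n] x with hu
  set S : Finset X := (Finset.range l).image (fun i => f^[i] y) with hS
  -- every limit of a subsequence of u lies in S
  have memS : ∀ (φ : ℕ → ℕ), StrictMono φ → ∀ z : X,
      Tendsto (fun k => u (φ k)) atTop (𝓝 z) → z ∈ (S : Set X) := by
    intro φ hφ z hz
    have hz' : z ∈ {z : X | ∃ ψ : ℕ → ℕ, StrictMono ψ ∧
        Tendsto (fun k => f^[ψ k] x) atTop (𝓝 z)} := by
      refine ⟨fun k => l * φ k, fun a b h => ?_, hz⟩
      exact (Nat.mul_lt_mul_left hl).mpr (hφ h)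
    rw [homega] at hz'
    obtain ⟨k, hk⟩ := hz'
    have hmod : f^[k % l] y = f^[k] y := hper.iterate_mod_apply k
    exact Finset.mem_coe.mpr (Finset.mem_image.mpr
      ⟨k % l, Finset.mem_range.mpr (Nat.mod_lt _ hl), by rw [hmod]; exact hk⟩)
  -- points of S are fixed by f^[l]
  have hly : f^[l] y = y := hper
  have hfix : ∀ q ∈ S, f^[l] q = q := by
    intro q hq
    obtain ⟨i, _, rfl⟩ := Finset.mem_image.mp hq
    rw [← Function.iterate_add_apply, Nat.add_comm, Function.iterate_add_apply, hly]
  -- u eventually gets within ε of S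
  have hnear : ∀ ε > 0, ∃ N, ∀ n ≥ N, ∃ q ∈ S, dist (u n) q < ε := by
    intro ε hε
    by_contra hcon
    push_neg at hcon
    have hfreq : ∃ᶠ n in atTop, ∀ q ∈ S, ε ≤ dist (u n) q := by
      rw [Filter.frequently_atTop]
      intro N; obtain ⟨n, hn, h⟩ := hcon N; exact ⟨n, hn, h⟩
    obtain ⟨ψ, hψ, hψp⟩ := Filter.extraction_of_frequently_atTop hfreq
    obtain ⟨z, σ, hσ, hconv⟩ := CompactSpace.tendsto_subseq (u ∘ ψ)
    have hzS : z ∈ (S : Set X) := memS (ψ ∘ σ) (hψ.comp hσ) z hconv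
    have hd : Tendsto (fun k => dist ((u ∘ ψ ∘ σ) k) z) atTop (𝓝 (dist z z)) :=
      hconv.dist tendsto_const_nhds
    have : ε ≤ dist z z := ge_of_tendsto' hd fun k => hψp (σ k) z hzS
    rw [dist_self] at this
    linarith
  -- separation of the finite set S
  have hsep : ∃ D > 0, ∀ a ∈ S, ∀ b ∈ S, dist a b < D → a = b := by
    set P : Finset ℝ := ((S ×ˢ S).filter fun pr => pr.1 ≠ pr.2).image
      fun pr => dist pr.1 pr.2 with hP
    by_cases hPne : P.Nonempty
    · refine ⟨P.min' hPne, ?_, ?_⟩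
      · obtain ⟨pr, hpr, hpr'⟩ := Finset.mem_image.mp (P.min'_mem hPne)
        have : pr.1 ≠ pr.2 := (Finset.mem_filter.mp hpr).2
        rw [← hpr']
        exact dist_pos.mpr this
      · intro a ha b hb hab
        by_contra hne
        have hmem : dist a b ∈ P := Finset.mem_image.mpr
          ⟨(a, b), Finset.mem_filter.mpr ⟨Finset.mem_product.mpr ⟨ha, hb⟩, hne⟩, rfl⟩
        exact absurd (P.min'_le _ hmem) (not_le.mpr hab)
    · refine ⟨1, one_pos, fun a ha b hb _ => ?_⟩
      by_contra hne
      exact hPne ⟨dist a b, Finset.mem_image.mpr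
        ⟨(a, b), Finset.mem_filter.mpr ⟨Finset.mem_product.mpr ⟨ha, hb⟩, hne⟩, rfl⟩⟩
  -- uniform continuity of f^[l]
  have hguc : UniformContinuous f^[l] :=
    CompactSpace.uniformContinuous_of_continuous (hf.iterate l)
  -- limit of a subsequence
  obtain ⟨p, φ, hφ, hpconv⟩ := CompactSpace.tendsto_subseq u
  have hpS : p ∈ (S : Set X) := memS φ hφ p hpconv
  obtain ⟨i, hi, hip⟩ := Finset.mem_image.mp hpS
  refine ⟨i, Finset.mem_range.mp hi, ?_⟩
  rw [hip, Metric.tendsto_atTop]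
  intro ε hε
  obtain ⟨D, hD, hDsep⟩ := hsep
  have hε₁ : 0 < min ε (D / 3) := lt_min hε (by linarith)
  set ε₁ := min ε (D / 3) with hε₁def
  obtain ⟨δ, hδ, hδp⟩ := Metric.uniformContinuous_iff.mp hguc ε₁ hε₁
  have hε₂ : 0 < min δ ε₁ := lt_min hδ hε₁
  set ε₂ := min δ ε₁ with hε₂def
  obtain ⟨N, hN⟩ := hnear ε₂ hε₂
  obtain ⟨q, hqS, hq⟩ := hN N le_rfl
  have key : ∀ k, dist (u (N + k)) q < ε₂ := by
    intro k
    induction k with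
    | zero => simpa using hq
    | succ k ih =>
      have hstep : u (N + k + 1) = f^[l] (u (N + k)) := by
        simp only [hu]
        rw [Nat.mul_add, Nat.mul_one, Nat.add_comm, Function.iterate_add_apply]
      have h1 : dist (u (N + k + 1)) q < ε₁ := by
        rw [hstep]
        calc dist (f^[l] (u (N + k))) q
            = dist (f^[l] (u (N + k))) (f^[l] q) := by rw [hfix q hqS]
          _ < ε₁ := hδp (ih.trans_le (min_le_left _ _))
      obtain ⟨q', hq'S, hq'⟩ := hN (N + k + 1) (by omega)
      have hqq : q' = q := by
        refine hDsep _ hq'S _ hqS ?_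
        have ht := dist_triangle q' (u (N + k + 1)) q
        rw [dist_comm q' (u (N + k + 1))] at ht
        have h2 : ε₂ ≤ ε₁ := min_le_right _ _
        have h3 : ε₁ ≤ D / 3 := min_le_right _ _
        linarith
      rw [hqq] at hq'
      exact hq'
  have hpq : p = q := by
    refine hDsep _ hpS _ hqS ?_
    have hconvd : Tendsto (fun k => dist ((u ∘ φ) k) q) atTop (𝓝 (dist p q)) :=
      hpconv.dist tendsto_const_nhds
    have hle : dist p q ≤ ε₂ := by
      refine le_of_tendsto hconvd ?_
      filter_upwards [eventually_ge_atTop N] with k hk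
      have hφk : N ≤ φ k := hk.trans hφ.le_apply
      have := key (φ k - N)
      rw [Nat.add_sub_cancel' hφk] at this
      exact this.le
    have h2 : ε₂ ≤ ε₁ := min_le_right _ _
    have h3 : ε₁ ≤ D / 3 := min_le_right _ _
    linarith
  refine ⟨N, fun n hn => ?_⟩
  have := key (n - N)
  rw [Nat.add_sub_cancel' hn] at this
  rw [hpq]
  exact this.trans_le ((min_le_right _ _).trans (min_le_left _ _))
end

section
/- Let X be a compact metric space and f : X → X continuous. Suppose x ∈ X, (x_n) is a sequence in X with x_n → x, g = f^l for some positive integer l, and the orbits O_g(x_n) converge to the point x (i.e., for every open V ∋ x there is m such that O_g(x_n) ⊆ V for all n ≥ m). Then the orbits O_f(x_n) converge to the set O_f(x) (i.e., for every open V ⊇ O_f(x) there is m such that O_f(x_n) ⊆ V for all n ≥ m). -/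
open Filter Topology

theorem stmt_8 {X : Type*} [MetricSpace X] [CompactSpace X]
    (f : X → X) (hf : Continuous f) (x : X) (u : ℕ → X)
    (hu : Filter.Tendsto u Filter.atTop (𝓝 x))
    (l : ℕ) (hl : 0 < l) (g : X → X) (hg : g = f^[l])
    (horb : ∀ V : Set X, IsOpen V → x ∈ V →
      ∃ m : ℕ, ∀ n ≥ m, (Set.range fun k => g^[k] (u n)) ⊆ V) :
    ∀ V : Set X, IsOpen V → (Set.range fun k => f^[k] x) ⊆ V →
      ∃ m : ℕ, ∀ n ≥ m, (Set.range fun k => f^[k] (u n)) ⊆ V := by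
  intro V hV hVorb
  set W : Set X := ⋂ r ∈ Finset.range l, (f^[r]) ⁻¹' V with hW
  have hWopen : IsOpen W := isOpen_biInter_finset fun r _ =>
    (hV.preimage (hf.iterate r))
  have hxW : x ∈ W := by
    simp only [hW, Set.mem_iInter, Set.mem_preimage]
    intro r _
    exact hVorb ⟨r, rfl⟩
  obtain ⟨m, hm⟩ := horb W hWopen hxW
  refine ⟨m, fun n hn => ?_⟩
  rintro _ ⟨k, rfl⟩
  have hkey : g^[k / l] (u n) ∈ W := hm n hn ⟨k / l, rfl⟩
  have hrl : k % l < l := Nat.mod_lt _ hl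
  have : f^[k] (u n) = f^[k % l] (g^[k / l] (u n)) := by
    rw [hg, ← Function.iterate_mul, ← Function.iterate_add_apply,
      Nat.mod_add_div]
  show f^[k] (u n) ∈ V
  rw [this]
  have := Set.mem_iInter₂.mp hkey (k % l) (Finset.mem_range.mpr hrl)
  exact this
end

section
/- Let X be a compact metrizable countable space, f : X → X continuous, and suppose every accumulation point of X is a periodic point of f. If x ∈ X is a fixed point of f and (x_n) is a sequence of periodic points converging to x, then the orbits O_f(x_n) converge to x: for every open V ∋ x there is m such that O_f(x_n) ⊆ V for all n ≥ m. -/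
/-!
Call a point `y` bad if it is `f^[n]`-periodic but the `f^[n]`-orbits of `f^[n]`-periodic points
tending to `y` do not eventually stay in every neighbourhood of `y`. Around a bad `y`, fixed by
`g = f^[n]`, pick clopen neighbourhoods `U ⊆ W` with `g '' U ⊆ W` (countable compact metrizable
spaces are zero-dimensional). Escaping orbits that start in `U` leave `W` from a point of `W \ U`;
a limit `ζ` of such exit points lies in `W` but not in `U`, and is periodic, being a limit of
periodic points. It is bad again: otherwise the exit points, pushed forward by at most `p` further
steps (`p` a period of `ζ`), would converge both to `ζ` and to `y`. Hence the bad points form a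
countable set without isolated points, which in a compact metric space must be empty, since every
nonempty perfect set there contains a Cantor set.
-/

open Filter Topology Set Function

section

variable {X : Type*}

theorem Perfect.eq_empty_of_countable [MetricSpace X] [CompleteSpace X] {C : Set X}
    (hC : Perfect C) (hc : C.Countable) : C = ∅ := by
  by_contra hne
  obtain ⟨F, hFC, -, hF⟩ := hC.exists_nat_bool_injection (nonempty_iff_ne_empty.2 hne)
  have : Countable (range F) := (hc.mono hFC).to_subtype
  have : Uncountable (ℕ → Bool) := by
    rw [← Cardinal.aleph0_lt_mk_iff]
    simpa using Cardinal.aleph0_lt_continuum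
  exact not_injective_uncountable_countable (rangeFactorization F)
    (hF.codRestrict _)

theorem mem_of_tendsto_of_forall_nhdsNE_neBot [TopologicalSpace X] {S : Set X}
    (hS : ∀ z, (𝓝[≠] z).NeBot → z ∈ S) {w : ℕ → X} (hw : ∀ k, w k ∈ S) {z : X}
    (hwz : Tendsto w atTop (𝓝 z)) : z ∈ S := by
  by_cases h : ∃ k, w k = z
  · obtain ⟨k, rfl⟩ := h
    exact hw k
  push Not at h
  exact hS z (tendsto_nhdsWithin_of_tendsto_nhds_of_eventually_within _ hwz
    (Eventually.of_forall h)).neBot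

namespace Function

variable {g : X → X}

theorem exists_iterate_apply_iterate_eq {v : X} (hv : v ∈ periodicPts g) (c : ℕ) :
    ∃ m, g^[m] (g^[c] v) = v := by
  obtain ⟨n, hn, hvn⟩ := hv
  rw [← mem_periodicOrbit_iff (mk_mem_periodicPts hn (hvn.apply_iterate c)),
    periodicOrbit_apply_iterate_eq ⟨n, hn, hvn⟩]
  exact self_mem_periodicOrbit ⟨n, hn, hvn⟩

theorem exists_iterate_mem_diff_of_mapsTo {U W : Set X} (hUW : U ⊆ W) (hg : MapsTo g U W)
    {x : X} (hx : x ∈ U) {k : ℕ} (hk : g^[k] x ∉ W) : ∃ c, g^[c] x ∈ W \ U := by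
  by_contra h
  have hU : ∀ c, g^[c] x ∈ U := by
    intro c
    induction c with
    | zero => exact hx
    | succ c ih =>
      by_contra hc
      exact h ⟨c + 1, by rw [iterate_succ_apply']; exact hg ih, hc⟩
  exact hk (hUW (hU k))

theorem tendsto_iterate_of_isFixedPt [TopologicalSpace X] {ι : Type*} {l : Filter ι}
    (hg : Continuous g) {y : X} (hy : IsFixedPt g y) {v : ι → X} (hv : Tendsto v l (𝓝 y))
    {j : ι → ℕ} {N : ℕ} (hj : ∀ i, j i ≤ N) : Tendsto (fun i => g^[j i] (v i)) l (𝓝 y) := by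
  intro V hV
  have hpre : ∀ n ∈ Iic N, g^[n] ⁻¹' V ∈ 𝓝 y := fun n _ =>
    (hg.iterate n).continuousAt.preimage_mem_nhds ((hy.iterate n).eq.symm ▸ hV)
  exact (hv.eventually_mem ((biInter_mem (finite_Iic N)).2 hpre)).mono fun i hi =>
    mem_iInter₂.1 hi (j i) (hj i)

end Function

section OrbitConvergence

variable [TopologicalSpace X] {g : X → X}

def OrbitsConvergeAt (g : X → X) (y : X) : Prop :=
  ∀ v : ℕ → X, (∀ n, v n ∈ periodicPts g) → Tendsto v atTop (𝓝 y) →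
    ∀ V ∈ 𝓝 y, ∀ᶠ n in atTop, ∀ k, g^[k] (v n) ∈ V

def nonConvergentPeriodicPts (f : X → X) : Set X :=
  {y | ∃ n > 0, IsPeriodicPt f n y ∧ ¬ OrbitsConvergeAt f^[n] y}

theorem OrbitsConvergeAt.eq_of_iterate [T2Space X] (hg : Continuous g) {y ζ : X}
    (hy : IsFixedPt g y) {p : ℕ} (hp : 0 < p) (hζ : OrbitsConvergeAt g^[p] ζ) {w v : ℕ → X}
    (hw : ∀ k, w k ∈ periodicPts g) (hwζ : Tendsto w atTop (𝓝 ζ))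
    (hvy : Tendsto v atTop (𝓝 y)) (hwv : ∀ k, ∃ m, g^[m] (w k) = v k) : ζ = y := by
  choose m hm using hwv
  have hshift : ∀ k, g^[p - m k % p] (v k) = (g^[p])^[m k / p + 1] (w k) := by
    intro k
    -- `p - m k % p` more steps complete `m k` to the multiple `p * (m k / p + 1)`
    rw [← hm k, ← iterate_add_apply, ← iterate_mul]
    have := Nat.mod_lt (m k) hp
    have := Nat.div_add_mod (m k) p
    congr 1
    rw [mul_add, mul_one]
    omega
  have hwp : ∀ k, w k ∈ periodicPts g^[p] := fun k => by
    obtain ⟨n, hn, hwn⟩ := hw k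
    exact ⟨n, hn, hwn.iterate p⟩
  have hζlim : Tendsto (fun k => (g^[p])^[m k / p + 1] (w k)) atTop (𝓝 ζ) := fun V hV =>
    (hζ w hwp hwζ V hV).mono fun k hk => hk _
  have hylim : Tendsto (fun k => g^[p - m k % p] (v k)) atTop (𝓝 y) :=
    tendsto_iterate_of_isFixedPt hg hy hvy fun k => Nat.sub_le p _
  exact tendsto_nhds_unique hζlim (hylim.congr hshift)

end OrbitConvergence

section Countable

variable [TopologicalSpace X] [CompactSpace X] [TopologicalSpace.MetrizableSpace X] [Countable X]
  {g : X → X}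

theorem exists_tendsto_of_not_orbitsConvergeAt (hg : Continuous g) {y : X} (hy : IsFixedPt g y)
    (hbad : ¬ OrbitsConvergeAt g y) {N : Set X} (hN : N ∈ 𝓝 y) :
    ∃ ζ ∈ N, ζ ≠ y ∧ ∃ w v : ℕ → X, (∀ k, w k ∈ periodicPts g) ∧ Tendsto w atTop (𝓝 ζ) ∧
      Tendsto v atTop (𝓝 y) ∧ ∀ k, ∃ m, g^[m] (w k) = v k := by
  simp only [OrbitsConvergeAt, not_forall, not_eventually, exists_prop] at hbad
  obtain ⟨v, hv, hvy, V, hV, hescape⟩ := hbad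
  obtain ⟨W, ⟨hyW, hW⟩, hWVN⟩ := (nhds_basis_clopen y).mem_iff.1 (inter_mem hV hN)
  have hWy : W ∈ 𝓝 y := hW.isOpen.mem_nhds hyW
  obtain ⟨U, ⟨hyU, hU⟩, hUW⟩ := (nhds_basis_clopen y).mem_iff.1
    (inter_mem hWy (hg.continuousAt.preimage_mem_nhds (hy.symm ▸ hWy)))
  have hexit : ∃ᶠ n in atTop, ∃ c, g^[c] (v n) ∈ W \ U :=
    (hescape.and_eventually (hvy.eventually (hU.isOpen.mem_nhds hyU))).mono
      fun n ⟨⟨k, hk⟩, hvU⟩ => exists_iterate_mem_diff_of_mapsTo (fun z hz => (hUW hz).1)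
        (fun z hz => (hUW hz).2) hvU fun h => hk (hWVN h).1
  obtain ⟨φ, hφ, hφc⟩ := extraction_of_frequently_atTop hexit
  choose c hc using hφc
  obtain ⟨ζ, -, ψ, hψ, hζ⟩ := isCompact_univ.tendsto_subseq
    (x := fun k => g^[c k] (v (φ k))) fun _ => mem_univ _
  have hζW : ζ ∈ W := hW.isClosed.mem_of_tendsto hζ (.of_forall fun k => (hc _).1)
  have hζU : ζ ∉ U := hU.isOpen.isClosed_compl.mem_of_tendsto hζ (.of_forall fun k => (hc _).2)
  refine ⟨ζ, (hWVN hζW).2, fun h => hζU (h ▸ hyU), _, _, fun k => ?_, hζ,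
    hvy.comp (hφ.comp hψ).tendsto_atTop, fun k => exists_iterate_apply_iterate_eq (hv _) _⟩
  obtain ⟨n, hn, hvn⟩ := hv (φ (ψ k))
  exact mk_mem_periodicPts hn (hvn.apply_iterate _)

theorem exists_not_orbitsConvergeAt_iterate (hg : Continuous g)
    (hacc : ∀ z, (𝓝[≠] z).NeBot → z ∈ periodicPts g) {y : X} (hy : IsFixedPt g y)
    (hbad : ¬ OrbitsConvergeAt g y) {N : Set X} (hN : N ∈ 𝓝 y) :
    ∃ ζ ∈ N, ζ ≠ y ∧ ∃ p > 0, IsPeriodicPt g p ζ ∧ ¬ OrbitsConvergeAt g^[p] ζ := by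
  obtain ⟨ζ, hζN, hζy, w, v, hw, hwζ, hvy, hwv⟩ :=
    exists_tendsto_of_not_orbitsConvergeAt hg hy hbad hN
  obtain ⟨p, hp, hζp⟩ := mem_of_tendsto_of_forall_nhdsNE_neBot hacc hw hwζ
  exact ⟨ζ, hζN, hζy, p, hp, hζp, fun hconv => hζy (hconv.eq_of_iterate hg hy hp hw hwζ hvy hwv)⟩

theorem preperfect_nonConvergentPeriodicPts {f : X → X} (hf : Continuous f)
    (hacc : ∀ z, (𝓝[≠] z).NeBot → z ∈ periodicPts f) :
    Preperfect (nonConvergentPeriodicPts f) := by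
  rw [preperfect_iff_nhds]
  rintro y ⟨n, hn, hyn, hbad⟩ N hN
  have hacc' : ∀ z, (𝓝[≠] z).NeBot → z ∈ periodicPts f^[n] := fun z hz => by
    obtain ⟨m, hm, hzm⟩ := hacc z hz
    exact ⟨m, hm, hzm.iterate n⟩
  obtain ⟨ζ, hζN, hζy, p, hp, hζp, hζbad⟩ :=
    exists_not_orbitsConvergeAt_iterate (hf.iterate n) hacc' hyn hbad hN
  refine ⟨ζ, ⟨hζN, n * p, Nat.mul_pos hn hp, ?_, ?_⟩, hζy⟩
  · rwa [IsPeriodicPt, iterate_mul]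
  · rwa [iterate_mul]

theorem orbitsConvergeAt_of_isPeriodicPt {f : X → X} (hf : Continuous f)
    (hacc : ∀ z, (𝓝[≠] z).NeBot → z ∈ periodicPts f) {n : ℕ} (hn : 0 < n) {y : X}
    (hy : IsPeriodicPt f n y) : OrbitsConvergeAt f^[n] y := by
  let := TopologicalSpace.metrizableSpaceMetric X
  have hempty : nonConvergentPeriodicPts f = ∅ := (closure_empty_iff _).1 <|
    (preperfect_nonConvergentPeriodicPts hf hacc).perfect_closure.eq_empty_of_countable
      (to_countable _)
  by_contra hbad
  exact hempty.subset ⟨n, hn, hy, hbad⟩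

end Countable

end

theorem stmt_9 {X : Type*} [TopologicalSpace X] [CompactSpace X]
    [TopologicalSpace.MetrizableSpace X] [Countable X]
    (f : X → X) (hf : Continuous f)
    (hacc : ∀ z : X, (𝓝[≠] z).NeBot → ∃ n : ℕ, 1 ≤ n ∧ f^[n] z = z)
    (x : X) (hx : f x = x) (u : ℕ → X)
    (hper : ∀ n : ℕ, ∃ m : ℕ, 1 ≤ m ∧ f^[m] (u n) = u n)
    (hu : Filter.Tendsto u Filter.atTop (𝓝 x)) :
    ∀ V : Set X, IsOpen V → x ∈ V →
      ∃ m : ℕ, ∀ n ≥ m, (Set.range fun k => f^[k] (u n)) ⊆ V := by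
  intro V hV hxV
  have hconv : OrbitsConvergeAt f x := by
    simpa using orbitsConvergeAt_of_isPeriodicPt hf hacc one_pos (IsFixedPt.isPeriodicPt hx 1)
  obtain ⟨m, hm⟩ := eventually_atTop.1 (hconv u hper hu V (hV.mem_nhds hxV))
  exact ⟨m, fun n hn => range_subset_iff.2 (hm n hn)⟩
end

section
/- Let X be a compact metrizable countable space, f : X → X continuous, and suppose every accumulation point of X is a periodic point of f. If (x_n) is a sequence of periodic points of f converging to x ∈ X, then the orbits O_f(x_n) converge to the set O_f(x): for every open V ⊇ O_f(x) there is m such that O_f(x_n) ⊆ V for all n ≥ m. -/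
open Filter Topology

private lemma iter_mul {X : Type*} {f : X → X} {z : X} {m : ℕ} (h : f^[m] z = z) (t : ℕ) :
    f^[m * t] z = z := by
  induction t with
  | zero => simp
  | succ t ih => rw [Nat.mul_succ, Function.iterate_add_apply, h, ih]

private lemma orbit_eq {X : Type*} {f : X → X} {z : X} {m : ℕ} (hm : 1 ≤ m)
    (h : f^[m] z = z) (k : ℕ) :
    (Set.range fun i => f^[i] (f^[k] z)) = Set.range fun i => f^[i] z := by
  apply Set.Subset.antisymm
  · rintro _ ⟨i, rfl⟩
    exact ⟨i + k, Function.iterate_add_apply f i k z⟩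
  · rintro _ ⟨i, rfl⟩
    refine ⟨i + (m * k - k), ?_⟩
    have hk : m * k - k + k = m * k := Nat.sub_add_cancel (Nat.le_mul_of_pos_left k hm)
    show f^[i + (m * k - k)] (f^[k] z) = f^[i] z
    rw [← Function.iterate_add_apply, show i + (m * k - k) + k = i + m * k by omega,
      Function.iterate_add_apply, iter_mul h]

private lemma orbit_finite {X : Type*} {f : X → X} {z : X} {m : ℕ} (hm : 1 ≤ m)
    (h : f^[m] z = z) : (Set.range fun i => f^[i] z).Finite := by
  refine Set.Finite.subset ((Set.finite_Iio m).image fun i => f^[i] z) ?_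
  rintro _ ⟨k, rfl⟩
  refine ⟨k % m, Nat.mod_lt _ hm, ?_⟩
  show f^[k % m] z = f^[k] z
  have e : f^[k] z = f^[k % m] z := by
    conv_lhs => rw [← Nat.div_add_mod k m]
    rw [Nat.add_comm (m * (k / m)) (k % m), Function.iterate_add_apply, iter_mul h]
  exact e.symm

/-- If the iterates of a sequence of periodic points hit a fixed point `c` at every index,
and the sequence converges to `x` whose orbit lies in `W`, then every iterate of `c` is in `W`. -/
private lemma isolated_contra {X : Type*} [TopologicalSpace X] [T1Space X] {f : X → X}
    {z : ℕ → X} (hz : ∀ j, ∃ m, 1 ≤ m ∧ f^[m] (z j) = z j)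
    {x c : X} {t : ℕ → ℕ} (h : ∀ j, f^[t j] (z j) = c)
    (hx : Tendsto z atTop (𝓝 x))
    {W : Set X} (hOx : (Set.range fun i => f^[i] x) ⊆ W)
    (e : ℕ) : f^[e] c ∈ W := by
  obtain ⟨m0, hm0, hz0⟩ := hz 0
  have horb : ∀ j, (Set.range fun i => f^[i] c) = Set.range fun i => f^[i] (z j) := by
    intro j
    obtain ⟨m, hm, hzj⟩ := hz j
    rw [← h j, orbit_eq hm hzj]
  have hfin : (Set.range fun i => f^[i] c).Finite := by
    rw [horb 0]; exact orbit_finite hm0 hz0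
  have hcl : IsClosed (Set.range fun i => f^[i] c) := hfin.isClosed
  have hxmem : x ∈ Set.range fun i => f^[i] c := by
    refine hcl.mem_of_tendsto hx (Eventually.of_forall fun j => ?_)
    rw [horb j]; exact ⟨0, rfl⟩
  rw [horb 0] at hxmem
  obtain ⟨k, hk⟩ := hxmem
  have hOxc : (Set.range fun i => f^[i] x) = Set.range fun i => f^[i] c := by
    rw [← hk, orbit_eq hm0 hz0]
    exact (horb 0).symm
  have : f^[e] c ∈ Set.range fun i => f^[i] x := by
    rw [hOxc]; exact ⟨e, rfl⟩
  exact hOx this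

private lemma tds_of_countable {X : Type*} [MetricSpace X] [Countable X] :
    TotallyDisconnectedSpace X := by
  refine ⟨fun s _ hs a ha b hb => ?_⟩
  by_contra hab
  have hd : (0 : ℝ) < dist a b := dist_pos.mpr hab
  have hcont : ContinuousOn (fun y => dist a y) s :=
    (continuous_const.dist continuous_id).continuousOn
  have hIcc : Set.Icc (dist a a) (dist a b) ⊆ (fun y => dist a y) '' s :=
    hs.intermediate_value ha hb hcont
  rw [dist_self] at hIcc
  have hcnt : (Set.Icc (0 : ℝ) (dist a b)).Countable :=
    ((Set.to_countable s).image _).mono hIcc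
  have := hcnt.le_aleph0
  rw [Cardinal.mk_Icc_real hd] at this
  exact absurd this (not_le.mpr Cardinal.aleph0_lt_continuum)

theorem stmt_10 {X : Type*} [TopologicalSpace X] [CompactSpace X]
    [TopologicalSpace.MetrizableSpace X] [Countable X]
    (f : X → X) (hf : Continuous f)
    (hacc : ∀ z : X, (𝓝[≠] z).NeBot → ∃ n : ℕ, 1 ≤ n ∧ f^[n] z = z)
    (x : X) (u : ℕ → X)
    (hper : ∀ n : ℕ, ∃ m : ℕ, 1 ≤ m ∧ f^[m] (u n) = u n)
    (hu : Filter.Tendsto u Filter.atTop (𝓝 x)) :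
    ∀ V : Set X, IsOpen V → (Set.range fun k => f^[k] x) ⊆ V →
      ∃ m : ℕ, ∀ n ≥ m, (Set.range fun k => f^[k] (u n)) ⊆ V := by
  classical
  letI : MetricSpace X := TopologicalSpace.metrizableSpaceMetric X
  haveI : TotallyDisconnectedSpace X := tds_of_countable
  intro V hV hOxV
  by_cases hA : ∀ᶠ n in atTop, u n = x
  · obtain ⟨m, hm⟩ := eventually_atTop.mp hA
    exact ⟨m, fun n hn => by rw [hm n hn]; exact hOxV⟩
  -- `x` is an accumulation point, hence periodic
  have hfreq : ∃ᶠ n in atTop, u n ∈ ({x}ᶜ : Set X) := by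
    simpa using Filter.not_eventually.mp hA
  have hne : (𝓝[≠] x).NeBot :=
    mem_closure_iff_nhdsWithin_neBot.mp (mem_closure_of_frequently_of_tendsto hfreq hu)
  obtain ⟨p, hp1, hpx⟩ := hacc x hne
  -- a clopen set `W` with `O(x) ⊆ W ⊆ V`
  have hWex : ∀ y ∈ (Set.range fun k => f^[k] x), ∃ Wy : Set X, IsClopen Wy ∧ y ∈ Wy ∧ Wy ⊆ V :=
    fun y hy => compact_exists_isClopen_in_isOpen hV (hOxV hy)
  choose! Wy hWyclopen hWymem hWysub using hWex
  set Ox : Set X := Set.range fun k => f^[k] x with hOxdef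
  set W : Set X := ⋃ y ∈ Ox, Wy y with hWdef
  have hWclopen : IsClopen W := (orbit_finite hp1 hpx).isClopen_biUnion hWyclopen
  have hWopen : IsOpen W := hWclopen.isOpen
  have hWclosed : IsClosed W := hWclopen.isClosed
  have hOxW : Ox ⊆ W := fun y hy => Set.mem_biUnion hy (hWymem y hy)
  have hWV : W ⊆ V := Set.iUnion₂_subset hWysub
  suffices hWgoal : ∃ m, ∀ n ≥ m, (Set.range fun k => f^[k] (u n)) ⊆ W by
    obtain ⟨m, hm⟩ := hWgoal
    exact ⟨m, fun n hn => (hm n hn).trans hWV⟩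
  by_contra hcon
  push_neg at hcon
  have hfreqbad : ∃ᶠ n in atTop, ¬(Set.range fun k => f^[k] (u n)) ⊆ W := by
    rw [Filter.frequently_atTop]
    intro m
    obtain ⟨n, hn, h⟩ := hcon m
    exact ⟨n, hn, h⟩
  -- extraction of a subsequence staying in W for longer and longer initial segments
  have hP : ∀ j : ℕ, ∃ᶠ n in atTop,
      (¬(Set.range fun k => f^[k] (u n)) ⊆ W) ∧ ∀ i ∈ Set.Iic j, f^[i] (u n) ∈ W := by
    intro j
    apply hfreqbad.and_eventually
    rw [eventually_all_finite (Set.finite_Iic j)]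
    intro i _
    exact (((hf.iterate i).tendsto x).comp hu).eventually
      (hWopen.eventually_mem (hOxW ⟨i, rfl⟩))
  obtain ⟨φ, hφmono, hφ⟩ := extraction_forall_of_frequently hP
  set z : ℕ → X := fun j => u (φ j) with hzdef
  have hzbad : ∀ j, ¬(Set.range fun k => f^[k] (z j)) ⊆ W := fun j => (hφ j).1
  have hzseg : ∀ j, ∀ i ∈ Set.Iic j, f^[i] (z j) ∈ W := fun j => (hφ j).2
  have hzper : ∀ j, ∃ m, 1 ≤ m ∧ f^[m] (z j) = z j := fun j => hper (φ j)
  have hzx : Tendsto z atTop (𝓝 x) := hu.comp hφmono.tendsto_atTop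
  have hzxmono : ∀ g : ℕ → ℕ, StrictMono g → Tendsto (fun i => z (g i)) atTop (𝓝 x) :=
    fun g hg => hzx.comp hg.tendsto_atTop
  -- first exit times
  have hex : ∀ j, ∃ k, f^[k] (z j) ∉ W := by
    intro j
    by_contra hc
    push_neg at hc
    exact hzbad j (by rintro _ ⟨k, rfl⟩; exact hc k)
  set K : ℕ → ℕ := fun j => Nat.find (hex j) with hKdef
  have hKout : ∀ j, f^[K j] (z j) ∉ W := fun j => Nat.find_spec (hex j)
  have hKmin : ∀ j, ∀ i < K j, f^[i] (z j) ∈ W := fun j i hi =>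
    not_not.mp (Nat.find_min (hex j) hi)
  have hKgt : ∀ j, j < K j := by
    intro j
    by_contra hc
    push_neg at hc
    exact hKout j (hzseg j (K j) hc)
  have hKpos : ∀ j, 1 ≤ K j := fun j => Nat.lt_of_le_of_lt (Nat.zero_le j) (hKgt j)
  -- the limit point `a` of pre-exit points
  obtain ⟨a, ψ, hψmono, hψa⟩ := CompactSpace.tendsto_subseq (fun j => f^[K j - 1] (z j))
  have haW : a ∈ W := hWclosed.mem_of_tendsto hψa (Eventually.of_forall fun i =>
    hKmin (ψ i) _ (Nat.sub_lt (hKpos (ψ i)) one_pos))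
  set b : X := f a with hbdef
  have hbseq : Tendsto (fun i => f^[K (ψ i)] (z (ψ i))) atTop (𝓝 b) := by
    refine Tendsto.congr (fun i => ?_) ((hf.tendsto a).comp hψa)
    show f (f^[K (ψ i) - 1] (z (ψ i))) = f^[K (ψ i)] (z (ψ i))
    conv_rhs => rw [show K (ψ i) = K (ψ i) - 1 + 1 from by have := hKpos (ψ i); omega]
    rw [Function.iterate_succ_apply']
  have hbW : b ∉ W :=
    hWopen.isClosed_compl.mem_of_tendsto hbseq (Eventually.of_forall fun i => hKout (ψ i))
  -- `a` is periodic
  obtain ⟨q, hq1, hqa⟩ : ∃ q, 1 ≤ q ∧ f^[q] a = a := by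
    by_cases hnb : (𝓝[≠] a).NeBot
    · exact hacc a hnb
    · exfalso
      rw [not_neBot, ← isOpen_singleton_iff_punctured_nhds] at hnb
      have heva : ∀ᶠ i in atTop, f^[K (ψ i) - 1] (z (ψ i)) = a := by
        have := hψa.eventually (hnb.eventually_mem (Set.mem_singleton a))
        simpa using this
      obtain ⟨i0, hi0⟩ := eventually_atTop.mp heva
      have hgm : StrictMono fun i : ℕ => ψ (i + i0) := fun m n h => hψmono (by omega)
      have hcontr := isolated_contra (f := f) (z := fun i => z (ψ (i + i0)))
        (fun i => hzper _) (t := fun i => K (ψ (i + i0)) - 1)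
        (fun i => hi0 (i + i0) (Nat.le_add_left _ _))
        (hzxmono _ hgm) hOxW 1
      rw [Function.iterate_one] at hcontr
      exact hbW hcontr
  -- the limit point `c` with `f^[q-1] c = a`
  obtain ⟨c, ρ, hρmono, hρc⟩ :=
    CompactSpace.tendsto_subseq (fun i => f^[K (ψ (i + q)) - q] (z (ψ (i + q))))
  have hJmono : StrictMono fun i : ℕ => ψ (ρ i + q) := fun m n h =>
    hψmono (by have := hρmono h; omega)
  have hKJq : ∀ i, q ≤ K (ψ (ρ i + q)) := by
    intro i
    have h1 : ρ i + q ≤ ψ (ρ i + q) := hψmono.le_apply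
    have h2 := hKgt (ψ (ρ i + q))
    omega
  have hρc' : Tendsto (fun i => f^[K (ψ (ρ i + q)) - q] (z (ψ (ρ i + q)))) atTop (𝓝 c) := hρc
  have hcW : c ∈ W := hWclosed.mem_of_tendsto hρc' (Eventually.of_forall fun i => by
    refine hKmin (ψ (ρ i + q)) _ ?_
    have := hKpos (ψ (ρ i + q))
    have := hKJq i
    omega)
  have hqc : f^[q - 1] c = a := by
    have h1 : Tendsto (fun i => f^[q - 1] (f^[K (ψ (ρ i + q)) - q] (z (ψ (ρ i + q))))) atTop
        (𝓝 (f^[q - 1] c)) := ((hf.iterate (q - 1)).tendsto c).comp hρc'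
    have h2 : ∀ i, f^[q - 1] (f^[K (ψ (ρ i + q)) - q] (z (ψ (ρ i + q))))
        = f^[K (ψ (ρ i + q)) - 1] (z (ψ (ρ i + q))) := by
      intro i
      rw [← Function.iterate_add_apply]
      congr 1
      have := hKJq i
      omega
    have hsm : StrictMono fun i : ℕ => ρ i + q := fun m n h =>
      Nat.add_lt_add_right (hρmono h) q
    have h3 : Tendsto (fun i => f^[K (ψ (ρ i + q)) - 1] (z (ψ (ρ i + q)))) atTop (𝓝 a) :=
      hψa.comp hsm.tendsto_atTop
    exact tendsto_nhds_unique (Tendsto.congr h2 h1) h3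
  have hbc : f^[q] c = b := by
    have e : q = q - 1 + 1 := (Nat.sub_add_cancel hq1).symm
    rw [e, Function.iterate_succ_apply', hqc]
  -- `c` is periodic
  obtain ⟨s, hs1, hsc⟩ : ∃ s, 1 ≤ s ∧ f^[s] c = c := by
    by_cases hnb : (𝓝[≠] c).NeBot
    · exact hacc c hnb
    · exfalso
      rw [not_neBot, ← isOpen_singleton_iff_punctured_nhds] at hnb
      have hevc : ∀ᶠ i in atTop, f^[K (ψ (ρ i + q)) - q] (z (ψ (ρ i + q))) = c := by
        have := hρc'.eventually (hnb.eventually_mem (Set.mem_singleton c))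
        simpa using this
      obtain ⟨i0, hi0⟩ := eventually_atTop.mp hevc
      have hgm : StrictMono fun i : ℕ => ψ (ρ (i + i0) + q) := fun m n h =>
        hψmono (by have := hρmono (show m + i0 < n + i0 by omega); omega)
      have hcontr := isolated_contra (f := f) (z := fun i => z (ψ (ρ (i + i0) + q)))
        (fun i => hzper _) (t := fun i => K (ψ (ρ (i + i0) + q)) - q)
        (fun i => hi0 (i + i0) (Nat.le_add_left _ _))
        (hzxmono _ hgm) hOxW q
      rw [hbc] at hcontr
      exact hbW hcontr
  -- final computation: b = c
  have h1 : f^[q - 1] b = a := by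
    rw [← hbc, ← Function.iterate_add_apply,
      show q - 1 + q = q + (q - 1) by omega, Function.iterate_add_apply, hqc, hqa]
  have hsb : f^[s * q] b = b := by
    calc f^[s * q] b = f^[s * q] (f^[q] c) := by rw [hbc]
      _ = f^[s * q + q] c := (Function.iterate_add_apply f (s * q) q c).symm
      _ = f^[q + s * q] c := by rw [Nat.add_comm]
      _ = f^[q] (f^[s * q] c) := Function.iterate_add_apply f q (s * q) c
      _ = f^[q] c := by rw [iter_mul hsc]
      _ = b := hbc
  have hd : s * q - (q - 1) + (q - 1) = s * q := by
    have : q ≤ s * q := Nat.le_mul_of_pos_left q hs1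
    omega
  have key : b = c := by
    calc b = f^[s * q] b := hsb.symm
      _ = f^[s * q - (q - 1)] (f^[q - 1] b) := by rw [← Function.iterate_add_apply, hd]
      _ = f^[s * q - (q - 1)] a := by rw [h1]
      _ = f^[s * q - (q - 1)] (f^[q - 1] c) := by rw [hqc]
      _ = f^[s * q] c := by rw [← Function.iterate_add_apply, hd]
      _ = c := iter_mul hsc q
  exact hbW (key ▸ hcW)
end

section
/- Let X be a compact metrizable countable space and f : X → X continuous. Suppose x ∈ X has infinite orbit and there exists y ∈ ω_f(x) with f(y) = y such that y has Cantor–Bendixson rank 1 in X (i.e., y is an accumulation point of X but is isolated in the set of accumulation points of X). Then the full sequence of iterates converges: f^n(x) → y as n → ∞. -/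
open Filter Topology

/-- If the orbit of `x` is infinite, then any subsequential limit of the orbit is an
accumulation point of the space. -/
lemma omega_limit_acc {X : Type*} [TopologicalSpace X]
    (f : X → X) (x : X)
    (hinf : (Set.range fun k => f^[k] x).Infinite)
    {z : X} {ψ : ℕ → ℕ} (hψ : StrictMono ψ)
    (hlim : Filter.Tendsto (fun k => f^[ψ k] x) Filter.atTop (𝓝 z)) :
    (𝓝[≠] z).NeBot := by
  by_contra h
  rw [Filter.not_neBot] at h
  have hz : 𝓝 z = pure z := by
    rw [← nhdsNE_sup_pure z, h, bot_sup_eq]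
  have hmem : {z} ∈ 𝓝 z := by rw [hz]; exact Filter.mem_pure.mpr rfl
  have hev : ∀ᶠ k in atTop, f^[ψ k] x ∈ ({z} : Set X) :=
    Filter.tendsto_def.mp hlim _ hmem
  obtain ⟨k0, hk0⟩ := Filter.eventually_atTop.mp hev
  have hab : ψ k0 < ψ (k0 + 1) := hψ (Nat.lt_succ_self _)
  obtain ⟨a, p, hp, ha, hper⟩ : ∃ a p, 0 < p ∧ f^[a] x = z ∧ f^[p] z = z := by
    have ha : f^[ψ k0] x = z := hk0 k0 le_rfl
    have hb : f^[ψ (k0 + 1)] x = z := hk0 (k0 + 1) (Nat.le_succ _)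
    refine ⟨ψ k0, ψ (k0 + 1) - ψ k0, Nat.sub_pos_of_lt hab, ha, ?_⟩
    calc f^[ψ (k0 + 1) - ψ k0] z = f^[ψ (k0 + 1) - ψ k0] (f^[ψ k0] x) := by rw [ha]
      _ = f^[ψ (k0 + 1) - ψ k0 + ψ k0] x := (Function.iterate_add_apply f _ _ x).symm
      _ = f^[ψ (k0 + 1)] x := by rw [Nat.sub_add_cancel hab.le]
      _ = z := hb
  have key : ∀ t, f^[t] z = f^[t % p] z := by
    intro t
    induction t using Nat.strong_induction_on with
    | _ t ih =>
      by_cases ht : t < p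
      · rw [Nat.mod_eq_of_lt ht]
      · push_neg at ht
        have h1 : f^[t] z = f^[t - p] z := by
          conv_lhs => rw [show t = t - p + p from by omega]
          rw [Function.iterate_add_apply, hper]
        rw [h1, ih (t - p) (by omega), ← Nat.mod_eq_sub_mod ht]
  refine hinf ?_
  have hsub : (Set.range fun k => f^[k] x) ⊆ (fun j => f^[j] x) '' Set.Iic (a + p) := by
    rintro _ ⟨n, rfl⟩
    by_cases hn : n ≤ a
    · exact ⟨n, le_trans hn (Nat.le_add_right _ _), rfl⟩
    · push_neg at hn
      have hlt : (n - a) % p < p := Nat.mod_lt _ hp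
      refine ⟨(n - a) % p + a, by simp only [Set.mem_Iic, Nat.add_comm a p]; exact Nat.add_le_add hlt.le le_rfl, ?_⟩
      have h1 : f^[n] x = f^[n - a] z := by
        rw [← ha, ← Function.iterate_add_apply]
        congr 1; omega
      have h2 : f^[(n - a) % p + a] x = f^[(n - a) % p] z := by
        rw [← ha, ← Function.iterate_add_apply]
      show f^[(n - a) % p + a] x = f^[n] x
      rw [h2, ← key, ← h1]
  exact ((Set.finite_Iic _).image _).subset hsub

theorem stmt_11 {X : Type*} [TopologicalSpace X] [CompactSpace X]
    [TopologicalSpace.MetrizableSpace X] [Countable X]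
    (f : X → X) (hf : Continuous f) (x : X)
    (hinf : (Set.range fun k => f^[k] x).Infinite)
    (y : X)
    (hy : ∃ φ : ℕ → ℕ, StrictMono φ ∧
      Filter.Tendsto (fun k => f^[φ k] x) Filter.atTop (𝓝 y))
    (hfix : f y = y)
    (hacc : (𝓝[≠] y).NeBot)
    (hrank1 : ∃ U : Set X, IsOpen U ∧
      U ∩ {z : X | (𝓝[≠] z).NeBot} = {y}) :
    Filter.Tendsto (fun n => f^[n] x) Filter.atTop (𝓝 y) := by
  letI : MetricSpace X := TopologicalSpace.metrizableSpaceMetric X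
  obtain ⟨U, hUopen, hU⟩ := hrank1
  have hyU : y ∈ U := by
    have : y ∈ U ∩ {z : X | (𝓝[≠] z).NeBot} := by rw [hU]; rfl
    exact this.1
  -- frequently, the orbit visits any neighborhood of y
  have hfreq : ∀ s ∈ 𝓝 y, ∃ᶠ n in atTop, f^[n] x ∈ s := by
    obtain ⟨φ0, hφ0, hlim0⟩ := hy
    intro s hs
    rw [Filter.frequently_atTop]
    intro N
    obtain ⟨k0, hk0⟩ := Filter.eventually_atTop.mp (Filter.tendsto_def.mp hlim0 _ hs)
    refine ⟨φ0 (max N k0), le_trans (le_max_left _ _) (hφ0.le_apply), ?_⟩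
    exact hk0 _ (le_max_right _ _)
  by_contra hnot
  -- there is a neighborhood W of y missed frequently
  rw [Filter.tendsto_def] at hnot
  push_neg at hnot
  obtain ⟨W, hW, hWmiss0⟩ := hnot
  have hWmiss1 : ¬ ∀ᶠ n in atTop, f^[n] x ∈ W := hWmiss0
  rw [Filter.not_eventually] at hWmiss1
  have hWmiss : ∃ᶠ n in atTop, f^[n] x ∉ W := hWmiss1
  -- closed neighborhood C ⊆ U ∩ W
  obtain ⟨C, hCnhds, hCclosed, hCsub⟩ :=
    exists_mem_nhds_isClosed_subset (Filter.inter_mem (hUopen.mem_nhds hyU) hW)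
  -- exit times: f^[n] x ∈ C but f^[n+1] x ∉ C, frequently
  have hexit : ∃ᶠ n in atTop, f^[n] x ∈ C ∧ f^[n + 1] x ∉ C := by
    rw [Filter.frequently_atTop]
    intro N
    obtain ⟨n, hnN, hnC⟩ := Filter.frequently_atTop.mp (hfreq C hCnhds) N
    obtain ⟨m, hmn, hmC⟩ := Filter.frequently_atTop.mp hWmiss (n + 1)
    have hmC' : f^[m] x ∉ C := fun hc => hmC (hCsub hc).2
    have hQ : ∃ j, f^[n + j + 1] x ∉ C := ⟨m - n - 1, by
      have : n + (m - n - 1) + 1 = m := by omega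
      rw [this]; exact hmC'⟩
    classical
    let j0 := Nat.find hQ
    refine ⟨n + j0, by omega, ?_, Nat.find_spec hQ⟩
    rcases Nat.eq_zero_or_pos j0 with h0 | h0
    · show f^[n + j0] x ∈ C
      rw [h0]
      simpa using hnC
    · have := Nat.find_min hQ (m := j0 - 1) (by omega)
      have heq : n + (j0 - 1) + 1 = n + j0 := by omega
      rw [heq] at this
      exact not_not.mp this
  obtain ⟨φ, hφmono, hφ⟩ := Filter.extraction_of_frequently_atTop hexit
  have hCcomp : IsCompact C := hCclosed.isCompact
  obtain ⟨z, hzC, ψ, hψmono, hlim⟩ :=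
    hCcomp.tendsto_subseq (x := fun k => f^[φ k] x) (fun k => (hφ k).1)
  have hzlim : Filter.Tendsto (fun k => f^[(φ ∘ ψ) k] x) Filter.atTop (𝓝 z) := hlim
  have hzacc : (𝓝[≠] z).NeBot :=
    omega_limit_acc f x hinf (hφmono.comp hψmono) hzlim
  have hzy : z = y := by
    have : z ∈ U ∩ {w : X | (𝓝[≠] w).NeBot} := ⟨(hCsub hzC).1, hzacc⟩
    rw [hU] at this
    exact this
  -- the next iterates converge to f z = y, hence eventually in C: contradiction
  have hnext : Filter.Tendsto (fun k => f^[(φ ∘ ψ) k + 1] x) Filter.atTop (𝓝 y) := by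
    have : Filter.Tendsto (fun k => f (f^[(φ ∘ ψ) k] x)) Filter.atTop (𝓝 (f z)) :=
      (hf.tendsto z).comp hzlim
    rw [hzy, hfix] at this
    simpa [Function.iterate_succ_apply'] using this
  have hevC : ∀ᶠ k in atTop, f^[(φ ∘ ψ) k + 1] x ∈ C :=
    Filter.tendsto_def.mp hnext _ hCnhds
  obtain ⟨k, hk⟩ := hevC.exists
  exact (hφ (ψ k)).2 hk
end

section
/- Let X be a compact metrizable countable space, f : X → X continuous, and suppose every accumulation point of X is a periodic point of f. If x ∈ X has infinite orbit and y ∈ ω_f(x) is a fixed point of f, then f^n(x) → y as n → ∞. -/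
open Filter Topology

theorem stmt_12 {X : Type*} [TopologicalSpace X] [CompactSpace X]
    [TopologicalSpace.MetrizableSpace X] [Countable X]
    (f : X → X) (hf : Continuous f)
    (hacc : ∀ z : X, (𝓝[≠] z).NeBot → ∃ n : ℕ, 1 ≤ n ∧ f^[n] z = z)
    (x : X) (hinf : (Set.range fun k => f^[k] x).Infinite)
    (y : X)
    (hy : ∃ φ : ℕ → ℕ, StrictMono φ ∧
      Filter.Tendsto (fun k => f^[φ k] x) Filter.atTop (𝓝 y))
    (hfix : f y = y) :
    Filter.Tendsto (fun n => f^[n] x) Filter.atTop (𝓝 y) := by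
  classical
  letI : MetricSpace X := TopologicalSpace.metrizableSpaceMetric X
  set u : ℕ → X := fun k => f^[k] x with hu
  -- injectivity of the orbit map
  have key : ∀ a b : ℕ, a < b → u a = u b → False := by
    intro a b hab heq
    apply hinf
    have hsub : (Set.range fun k => f^[k] x) ⊆ u '' Set.Iio b := by
      rintro w ⟨k, rfl⟩
      induction k using Nat.strong_induction_on with
      | _ k ih =>
        by_cases hk : k < b
        · exact ⟨k, hk, rfl⟩
        · have hk' : b ≤ k := not_lt.1 hk
          have hrw : f^[k] x = u (k - b + a) := by
            calc f^[k] x = f^[(k - b) + b] x := by rw [Nat.sub_add_cancel hk']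
              _ = f^[k - b] (f^[b] x) := Function.iterate_add_apply f (k - b) b x
              _ = f^[k - b] (f^[a] x) := by
                  have : f^[a] x = f^[b] x := heq
                  rw [← this]
              _ = u (k - b + a) := (Function.iterate_add_apply f (k - b) a x).symm
          rw [show (fun k => f^[k] x) k = f^[k] x from rfl, hrw]
          exact ih (k - b + a) (by omega)
    exact ((Set.finite_Iio b).image u).subset hsub
  have hinj : Function.Injective u := by
    intro a b heq
    by_contra hne
    rcases Nat.lt_or_ge a b with h | h
    · exact key a b h heq
    · exact key b a (lt_of_le_of_ne h (Ne.symm hne)) heq.symm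
  -- the cluster set
  set Λ : Set X := ⋂ N : ℕ, closure (u '' Set.Ici N) with hΛ
  have hΛclosed : IsClosed Λ := isClosed_iInter fun _ => isClosed_closure
  have hvisits : ∀ z ∈ Λ, ∀ W : Set X, IsOpen W → z ∈ W → ∀ N, ∃ n, N ≤ n ∧ u n ∈ W := by
    intro z hz W hW hzW N
    have h1 : z ∈ closure (u '' Set.Ici N) := Set.mem_iInter.1 hz N
    rcases mem_closure_iff.1 h1 W hW hzW with ⟨w, hwW, ⟨n, hn, rfl⟩⟩
    exact ⟨n, hn, hwW⟩
  have hlim : ∀ φ : ℕ → ℕ, StrictMono φ → ∀ w : X,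
      Tendsto (fun k => u (φ k)) atTop (𝓝 w) → w ∈ Λ := by
    intro φ hφ w hw
    refine Set.mem_iInter.2 fun N => ?_
    refine mem_closure_of_tendsto hw ?_
    filter_upwards [eventually_ge_atTop N] with k hk
    exact ⟨φ k, le_trans hk (hφ.le_apply), rfl⟩
  have hyΛ : y ∈ Λ := by
    obtain ⟨φ, hφ, hten⟩ := hy
    exact hlim φ hφ y hten
  -- invariance
  have hfΛ : ∀ z ∈ Λ, f z ∈ Λ := by
    intro z hz
    refine Set.mem_iInter.2 fun N => ?_
    have h1 : z ∈ closure (u '' Set.Ici N) := Set.mem_iInter.1 hz N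
    have h2 : f z ∈ closure (f '' (u '' Set.Ici N)) :=
      (image_closure_subset_closure_image hf) ⟨z, h1, rfl⟩
    refine closure_mono ?_ h2
    rintro w ⟨_, ⟨n, hn, rfl⟩, rfl⟩
    exact ⟨n + 1, le_trans hn (Nat.le_succ n), Function.iterate_succ_apply' f n x⟩
  have hiterΛ : ∀ k : ℕ, ∀ z ∈ Λ, f^[k] z ∈ Λ := by
    intro k
    induction k with
    | zero => intro z hz; exact hz
    | succ k ih =>
      intro z hz
      rw [Function.iterate_succ_apply']
      exact hfΛ _ (ih z hz)
  -- every point of Λ is periodic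
  have hperiodic : ∀ z ∈ Λ, ∃ p : ℕ, 1 ≤ p ∧ f^[p] z = z := by
    intro z hz
    apply hacc
    rw [← mem_closure_iff_nhdsWithin_neBot]
    rw [mem_closure_iff]
    intro W hW hzW
    by_cases h : ∃ n0, u n0 = z
    · obtain ⟨n0, hn0⟩ := h
      obtain ⟨n, hn, hnW⟩ := hvisits z hz W hW hzW (n0 + 1)
      refine ⟨u n, hnW, fun hc => ?_⟩
      have : n = n0 := hinj (hc.trans hn0.symm)
      omega
    · obtain ⟨n, _, hnW⟩ := hvisits z hz W hW hzW 0
      exact ⟨u n, hnW, fun hc => h ⟨n, hc⟩⟩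
  -- orbit eventually in any open neighborhood of Λ
  have heventually : ∀ W : Set X, IsOpen W → Λ ⊆ W → ∀ᶠ n in atTop, u n ∈ W := by
    intro W hW hΛW
    by_contra h
    rw [Filter.not_eventually] at h
    obtain ⟨φ, hφ, hP⟩ := extraction_of_frequently_atTop h
    obtain ⟨w, hwW, ψ, hψ, hten⟩ :=
      (hW.isClosed_compl.isCompact).tendsto_subseq (x := fun k => u (φ k)) fun k => hP k
    exact hwW (hΛW (hlim (φ ∘ ψ) (hφ.comp hψ) w hten))
  -- Baire: Λ has an isolated point z
  haveI : Nonempty ↥Λ := ⟨⟨y, hyΛ⟩⟩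
  haveI : CompactSpace ↥Λ := isCompact_iff_compactSpace.1 hΛclosed.isCompact
  obtain ⟨i, hint⟩ : ∃ i : ↥Λ, (interior ({i} : Set ↥Λ)).Nonempty := by
    apply nonempty_interior_of_iUnion_of_closed (fun i : ↥Λ => isClosed_singleton)
    ext w
    simp
  obtain ⟨z, hzΛ⟩ := i
  have hopen : IsOpen ({⟨z, hzΛ⟩} : Set ↥Λ) := by
    obtain ⟨a, ha⟩ := hint
    have ha' : a = ⟨z, hzΛ⟩ := Set.mem_singleton_iff.1 (interior_subset ha)
    rw [ha'] at ha
    have : interior ({(⟨z, hzΛ⟩ : ↥Λ)} : Set ↥Λ) = {⟨z, hzΛ⟩} :=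
      subset_antisymm interior_subset (Set.singleton_subset_iff.2 ha)
    rw [← this]
    exact isOpen_interior
  rw [isOpen_induced_iff] at hopen
  obtain ⟨Uz, hUzo, hUzpre⟩ := hopen
  have hzUz : z ∈ Uz := by
    have : (⟨z, hzΛ⟩ : ↥Λ) ∈ (Subtype.val ⁻¹' Uz : Set ↥Λ) := by
      rw [hUzpre]; rfl
    exact this
  have hUzΛ : ∀ w ∈ Λ, w ∈ Uz → w = z := by
    intro w hw hwU
    have : (⟨w, hw⟩ : ↥Λ) ∈ (Subtype.val ⁻¹' Uz : Set ↥Λ) := hwU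
    rw [hUzpre] at this
    exact congrArg Subtype.val this
  -- the cycle of z
  obtain ⟨p, hp1, hpz⟩ := hperiodic z hzΛ
  set O : Set X := (fun j => f^[j] z) '' Set.Iio p with hO
  have hzO : z ∈ O := ⟨0, hp1, rfl⟩
  have hOfwd : ∀ a ∈ O, f a ∈ O := by
    rintro _ ⟨j, hj, rfl⟩
    simp only [Set.mem_Iio] at hj
    have hstep : f ((fun j => f^[j] z) j) = f^[j + 1] z :=
      (Function.iterate_succ_apply' f j z).symm
    rw [hstep]
    rcases Nat.lt_or_ge (j + 1) p with h | h
    · exact ⟨j + 1, h, rfl⟩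
    · have hjp : j + 1 = p := by omega
      rw [hjp, hpz]
      exact hzO
  have hOiter : ∀ k : ℕ, ∀ a ∈ O, f^[k] a ∈ O := by
    intro k
    induction k with
    | zero => intro a ha; exact ha
    | succ k ih =>
      intro a ha
      rw [Function.iterate_succ_apply']
      exact hOfwd _ (ih a ha)
  have hreturn : ∀ (w : X) (s q : ℕ), 1 ≤ q → f^[q] w = w → f^[s] w ∈ O → w ∈ O := by
    intro w s q hq1 hqw hsw
    have hfix' : f^[q * s] w = w := by
      rw [Function.iterate_mul]
      exact Function.IsFixedPt.iterate hqw s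
    have hle : s ≤ q * s := Nat.le_mul_of_pos_left s hq1
    have : w = f^[q * s - s] (f^[s] w) := by
      rw [← Function.iterate_add_apply, Nat.sub_add_cancel hle, hfix']
    rw [this]
    exact hOiter _ _ hsw
  -- O is open in Λ
  set U : Set X := ⋃ j ∈ Finset.range p, (f^[p - j]) ⁻¹' Uz with hUdef
  have hUopen : IsOpen U := isOpen_biUnion fun j _ => hUzo.preimage (hf.iterate _)
  have hOU : O ⊆ U := by
    rintro _ ⟨j, hj, rfl⟩
    simp only [Set.mem_Iio] at hj
    refine Set.mem_biUnion (Finset.mem_range.2 hj) ?_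
    show f^[p - j] (f^[j] z) ∈ Uz
    rw [← Function.iterate_add_apply, Nat.sub_add_cancel hj.le, hpz]
    exact hzUz
  have hUΛ : ∀ w ∈ Λ, w ∈ U → w ∈ O := by
    intro w hw hwU
    obtain ⟨j, hj, hwpre⟩ := Set.mem_iUnion₂.1 hwU
    have h1 : f^[p - j] w ∈ Λ := hiterΛ _ w hw
    have h2 : f^[p - j] w = z := hUzΛ _ h1 hwpre
    obtain ⟨q, hq1, hqw⟩ := hperiodic w hw
    exact hreturn w (p - j) q hq1 hqw (h2 ▸ hzO)
  -- Λ is contained in the cycle O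
  have hΛO : Λ ⊆ O := by
    intro w hw
    by_contra hwO
    have hwU : w ∉ U := fun h => hwO (hUΛ w hw h)
    set B : Set X := Λ \ U with hB
    have hBclosed : IsClosed B := hΛclosed.sdiff hUopen
    have hBO : Disjoint O B := Set.disjoint_left.2 fun a haO haB => haB.2 (hOU haO)
    have hOcpt : IsCompact O := ((Set.finite_Iio p).image _).isCompact
    obtain ⟨U₁, V, hU₁o, hVo, hOU₁, hBV, hd⟩ :=
      SeparatedNhds.of_isCompact_isCompact hOcpt hBclosed.isCompact hBO
    set U₃ : Set X := U₁ ∩ f ⁻¹' U₁ with hU₃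
    have hU₃o : IsOpen U₃ := hU₁o.inter (hU₁o.preimage hf)
    have hOU₃ : O ⊆ U₃ := fun a ha => ⟨hOU₁ ha, hOU₁ (hOfwd a ha)⟩
    have hcover : Λ ⊆ U₃ ∪ V := by
      intro w' hw'
      by_cases h : w' ∈ U
      · exact Or.inl (hOU₃ (hUΛ w' hw' h))
      · exact Or.inr (hBV ⟨hw', h⟩)
    obtain ⟨N, hN⟩ := eventually_atTop.1 (heventually _ (hU₃o.union hVo) hcover)
    obtain ⟨n, hnN, hnU₃⟩ := hvisits z hzΛ U₃ hU₃o (hOU₃ hzO) N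
    have hwB : w ∈ B := ⟨hw, hwU⟩
    obtain ⟨m, hm, hmV⟩ := hvisits w hw V hVo (hBV hwB) (n + 1)
    have hex : ∃ m, n + 1 ≤ m ∧ u m ∈ V := ⟨m, hm, hmV⟩
    have hspec := Nat.find_spec hex
    set m₀ := Nat.find hex with hm₀
    have hmin : ∀ k < m₀, ¬(n + 1 ≤ k ∧ u k ∈ V) := fun k hk => Nat.find_min hex hk
    have hprev : u (m₀ - 1) ∈ U₃ := by
      rcases Nat.lt_or_ge n (m₀ - 1) with h | h
      · have h1 : u (m₀ - 1) ∈ U₃ ∪ V := hN _ (by omega)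
        rcases h1 with h1 | h1
        · exact h1
        · exact absurd ⟨by omega, h1⟩ (hmin (m₀ - 1) (by omega))
      · have hsm : m₀ - 1 = n := by omega
        rw [hsm]
        exact hnU₃
    have heq : u m₀ = f (u (m₀ - 1)) := by
      have h1 : m₀ = (m₀ - 1) + 1 := by omega
      conv_lhs => rw [h1]
      exact Function.iterate_succ_apply' f (m₀ - 1) x
    have hmU₁ : u m₀ ∈ U₁ := by
      rw [heq]
      exact hprev.2
    exact (Set.disjoint_left.1 hd hmU₁) hspec.2
  -- conclude Λ = {y}
  obtain ⟨j, hj, hjy⟩ := hΛO hyΛ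
  simp only [Set.mem_Iio] at hj
  have hzy : z = y := by
    have h1 : f^[p - j] y = z := by
      rw [← hjy]
      show f^[p - j] (f^[j] z) = z
      rw [← Function.iterate_add_apply, Nat.sub_add_cancel hj.le]
      exact hpz
    have h2 : f^[p - j] y = y := Function.IsFixedPt.iterate hfix (p - j)
    rw [← h1, h2]
  have hΛy : Λ ⊆ {y} := by
    intro w hw
    obtain ⟨j', hj', rfl⟩ := hΛO hw
    show f^[j'] z = y
    rw [hzy]
    exact Function.IsFixedPt.iterate hfix j'
  rw [tendsto_nhds]
  intro W hWo hyW
  exact heventually W hWo fun w hw => by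
    rw [Set.mem_singleton_iff.1 (hΛy hw)]
    exact hyW
end

section
/- Let X be a compact metrizable countable space, f : X → X continuous, and suppose every accumulation point of X is a periodic point of f. Then for every x ∈ X there exists a periodic point y ∈ X such that ω_f(x) = O_f(y). -/
open Filter Topology
set_option linter.unusedSectionVars false
section Aux
variable {X : Type*} [MetricSpace X] [CompactSpace X]

lemma exists_one_div_lt {ε : ℝ} (hε : 0 < ε) :
    ∃ M : ℕ, ∀ n : ℕ, M ≤ n → (1:ℝ)/(n+1) < ε := by
  obtain ⟨M, hM⟩ := exists_nat_gt (1/ε)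
  refine ⟨M, fun n hn => ?_⟩
  have h1 : (1:ℝ)/ε < (n:ℝ)+1 := lt_of_lt_of_le hM (by exact_mod_cast Nat.le_succ_of_le hn)
  rw [div_lt_iff₀ (by positivity)]
  rw [div_lt_iff₀ hε] at h1
  linarith

def omegaSet (f : X → X) (x : X) : Set X :=
  {z : X | ∃ φ : ℕ → ℕ, StrictMono φ ∧
    Filter.Tendsto (fun k => f^[φ k] x) Filter.atTop (𝓝 z)}

lemma mem_omegaSet_iff {f : X → X} {x z : X} :
    z ∈ omegaSet f x ↔ ∀ ε > (0:ℝ), ∀ N : ℕ, ∃ n, N ≤ n ∧ dist (f^[n] x) z < ε := by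
  constructor
  · rintro ⟨φ, hφ, htd⟩ ε hε N
    obtain ⟨K, hK⟩ := (Metric.tendsto_atTop.1 htd) ε hε
    exact ⟨φ (max K N), le_trans (le_max_right K N) (hφ.le_apply), hK _ (le_max_left K N)⟩
  · intro h
    have h' : ∀ k : ℕ, ∀ N : ℕ, ∃ n, N ≤ n ∧ dist (f^[n] x) z < 1/(k+1) := fun k N =>
      h (1/(k+1)) (by positivity) N
    choose g hg1 hg2 using h'
    let φ : ℕ → ℕ := fun k => Nat.rec (g 0 0) (fun k ih => g (k+1) (ih+1)) k
    have hφs : ∀ n, φ (n+1) = g (n+1) (φ n + 1) := fun n => rfl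
    have hmono : StrictMono φ := strictMono_nat_of_lt_succ (fun n => by
      rw [hφs]
      exact lt_of_lt_of_le (Nat.lt_succ_self _) (hg1 (n+1) (φ n + 1)))
    have hdist : ∀ n, dist (f^[φ n] x) z < 1/(n+1) := by
      intro n
      cases n with
      | zero => exact hg2 0 0
      | succ m => rw [hφs]; exact hg2 (m+1) (φ m + 1)
    refine ⟨φ, hmono, ?_⟩
    rw [Metric.tendsto_atTop]
    intro ε hε
    obtain ⟨K, hK⟩ := exists_one_div_lt hε
    exact ⟨K, fun n hn => lt_trans (hdist n) (hK n hn)⟩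

lemma omegaSet_nonempty (f : X → X) (x : X) : (omegaSet f x).Nonempty := by
  obtain ⟨z, -, φ, hφ, htd⟩ :=
    (isCompact_univ (X := X)).tendsto_subseq (x := fun n => f^[n] x) (fun n => Set.mem_univ _)
  exact ⟨z, φ, hφ, htd⟩

lemma omegaSet_isClosed (f : X → X) (x : X) : IsClosed (omegaSet f x) := by
  refine isClosed_of_closure_subset (fun z hz => ?_)
  rw [mem_omegaSet_iff]
  intro ε hε N
  obtain ⟨w, hw, hdw⟩ := Metric.mem_closure_iff.1 hz (ε/2) (by linarith)
  obtain ⟨n, hn, hdn⟩ := mem_omegaSet_iff.1 hw (ε/2) (by linarith) N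
  refine ⟨n, hn, ?_⟩
  have := dist_triangle (f^[n] x) w z
  rw [dist_comm z w] at hdw
  linarith

lemma omegaSet_isCompact (f : X → X) (x : X) : IsCompact (omegaSet f x) :=
  (omegaSet_isClosed f x).isCompact

lemma omegaSet_maps {f : X → X} (hf : Continuous f) {x z : X} (hz : z ∈ omegaSet f x) :
    f z ∈ omegaSet f x := by
  obtain ⟨φ, hφ, htd⟩ := hz
  refine ⟨fun k => φ k + 1, fun a b hab => by simpa using hφ hab, ?_⟩
  have : Filter.Tendsto (fun k => f (f^[φ k] x)) Filter.atTop (𝓝 (f z)) :=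
    (hf.tendsto z).comp htd
  simpa [Function.iterate_succ_apply'] using this

lemma omegaSet_maps_iter {f : X → X} (hf : Continuous f) {x z : X} (hz : z ∈ omegaSet f x)
    (k : ℕ) : f^[k] z ∈ omegaSet f x := by
  induction k with
  | zero => simpa using hz
  | succ m ih => rw [Function.iterate_succ_apply']; exact omegaSet_maps hf ih

lemma omegaSet_surj {f : X → X} (hf : Continuous f) {x z : X} (hz : z ∈ omegaSet f x) :
    ∃ v ∈ omegaSet f x, f v = z := by
  obtain ⟨φ, hφ, htd⟩ := hz
  obtain ⟨v, -, ψ, hψ, htd2⟩ :=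
    (isCompact_univ (X := X)).tendsto_subseq
      (x := fun k => f^[φ (k+1) - 1] x) (fun n => Set.mem_univ _)
  have hφ1 : ∀ k, 1 ≤ φ (k+1) := fun k =>
    Nat.one_le_iff_ne_zero.2 (fun h0 => by
      have h1 := hφ (Nat.lt_succ_self k); rw [h0] at h1; omega)
  refine ⟨v, ⟨fun i => φ (ψ i + 1) - 1, ?_, htd2⟩, ?_⟩
  · intro a b hab
    have h1 : φ (ψ a + 1) < φ (ψ b + 1) := hφ (by simpa using hψ hab)
    have h2 := hφ1 (ψ a)
    show φ (ψ a + 1) - 1 < φ (ψ b + 1) - 1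
    omega
  · have h1 : Filter.Tendsto (fun i => f (f^[φ (ψ i + 1) - 1] x)) Filter.atTop (𝓝 (f v)) :=
      (hf.tendsto v).comp htd2
    have h2 : ∀ i, f (f^[φ (ψ i + 1) - 1] x) = f^[φ (ψ i + 1)] x := by
      intro i
      have hn : φ (ψ i + 1) = (φ (ψ i + 1) - 1) + 1 := by
        have := hφ1 (ψ i); omega
      conv_rhs => rw [hn]
      rw [Function.iterate_succ_apply']
    have h3 : Filter.Tendsto (fun i => f^[φ (ψ i + 1)] x) Filter.atTop (𝓝 (f v)) := by
      simpa [h2] using h1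
    have h4 : Filter.Tendsto (fun i => f^[φ (ψ i + 1)] x) Filter.atTop (𝓝 z) := by
      have hg : Filter.Tendsto (fun i => ψ i + 1) Filter.atTop Filter.atTop :=
        tendsto_atTop_mono (fun i => Nat.le_succ (ψ i)) hψ.tendsto_atTop
      exact htd.comp hg
    exact tendsto_nhds_unique h3 h4
end Aux

section More
variable {X : Type*} [MetricSpace X] [CompactSpace X]

lemma omegaSet_attract (f : X → X) (x : X) {δ : ℝ} (hδ : 0 < δ) :
    ∃ N, ∀ n, N ≤ n → ∃ w ∈ omegaSet f x, dist (f^[n] x) w ≤ δ := by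
  by_contra h
  push_neg at h
  have hfr : ∃ᶠ n in Filter.atTop, ∀ w ∈ omegaSet f x, δ < dist (f^[n] x) w := by
    rw [Filter.frequently_atTop]
    intro N; obtain ⟨n, hn, hw⟩ := h N; exact ⟨n, hn, hw⟩
  obtain ⟨φ, hφ, hP⟩ := Filter.extraction_of_frequently_atTop hfr
  obtain ⟨z, -, ψ, hψ, htd⟩ :=
    (isCompact_univ (X := X)).tendsto_subseq
      (x := fun n => f^[φ n] x) (fun n => Set.mem_univ _)
  have hz : z ∈ omegaSet f x := ⟨φ ∘ ψ, hφ.comp hψ, htd⟩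
  have h1 : ∀ k, δ < dist (f^[φ (ψ k)] x) z := fun k => hP (ψ k) z hz
  have h2 : Filter.Tendsto (fun k => dist (f^[φ (ψ k)] x) z) Filter.atTop (𝓝 0) := by
    have := htd.dist (tendsto_const_nhds (x := z) (f := Filter.atTop))
    simpa [Function.comp] using this
  obtain ⟨k, hk⟩ := (h2.eventually (gt_mem_nhds hδ)).exists
  exact absurd hk (not_lt.2 (h1 k).le)

lemma unifCont {f : X → X} (hf : Continuous f) {ε : ℝ} (hε : 0 < ε) :
    ∃ δ > 0, δ ≤ ε ∧ ∀ a b : X, dist a b ≤ δ → dist (f a) (f b) ≤ ε := by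
  have hu := CompactSpace.uniformContinuous_of_continuous hf
  rw [Metric.uniformContinuous_iff] at hu
  obtain ⟨δ, hδ, hd⟩ := hu ε hε
  refine ⟨min (δ/2) ε, by positivity, min_le_right _ _, fun a b hab => ?_⟩
  have h2 : dist a b < δ := lt_of_le_of_lt (le_trans hab (min_le_left _ _)) (by linarith)
  exact (hd h2).le

lemma omega_jump {f : X → X} (hf : Continuous f) {x s z : X} (K : Set X)
    (hs : s ∈ omegaSet f x) (hsK : s ∈ K) (hz : z ∈ omegaSet f x) (hzK : z ∉ K)
    {ε : ℝ} (hε : 0 < ε) :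
    ∃ w ∈ omegaSet f x, w ∉ K ∧ ∃ p ∈ K, dist (f w) p ≤ ε := by
  obtain ⟨δ, hδ0, hδε, hδ⟩ := unifCont hf (half_pos hε)
  obtain ⟨N, hN⟩ := omegaSet_attract f x hδ0
  have hπ : ∀ m : ℕ, ∃ w, w ∈ omegaSet f x ∧ (N ≤ m → dist (f^[m] x) w ≤ δ) := by
    intro m
    by_cases hm : N ≤ m
    · obtain ⟨w, hw1, hw2⟩ := hN m hm; exact ⟨w, hw1, fun _ => hw2⟩
    · exact ⟨s, hs, fun h => absurd h hm⟩
  choose π hπω hπd using hπ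
  obtain ⟨m1, hm1N, hm1⟩ := mem_omegaSet_iff.1 hz δ hδ0 N
  obtain ⟨m2, hm2N, hm2⟩ := mem_omegaSet_iff.1 hs δ hδ0 (m1+1)
  set π' : ℕ → X := fun m => if m = m1 then z else if m = m2 then s else π m with hπ'
  have hπ'ω : ∀ m, π' m ∈ omegaSet f x := by
    intro m
    simp only [hπ']
    split_ifs with h1 h2
    · exact hz
    · exact hs
    · exact hπω m
  have hπ'd : ∀ m, N ≤ m → dist (f^[m] x) (π' m) ≤ δ := by
    intro m hm
    simp only [hπ']
    split_ifs with h1 h2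
    · subst h1; exact hm1.le
    · subst h2; exact hm2.le
    · exact hπd m hm
  classical
  set P : ℕ → Prop := fun j => m1 ≤ j ∧ j < m2 ∧ π' j ∉ K with hP
  have hπ'm1 : π' m1 = z := by simp [hπ']
  have hπ'm2 : π' m2 = s := by
    have : m2 ≠ m1 := by omega
    simp [hπ', this]
  have hPm1 : P m1 := ⟨le_refl _, by omega, by rw [hπ'm1]; exact hzK⟩
  set j := Nat.findGreatest P m2 with hj
  have hPj : P j := Nat.findGreatest_spec (by omega : m1 ≤ m2) hPm1
  obtain ⟨hjm1, hjm2, hjK⟩ := hPj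
  have hnext : π' (j+1) ∈ K := by
    by_cases hcase : j + 1 = m2
    · rw [hcase, hπ'm2]; exact hsK
    · have hlt : j + 1 ≤ m2 := by omega
      have hnp := Nat.findGreatest_is_greatest (n := m2) (by omega : j < j + 1) hlt
      by_contra hK
      exact hnp ⟨by omega, by omega, hK⟩
  refine ⟨π' j, hπ'ω j, hjK, π' (j+1), hnext, ?_⟩
  have hNj : N ≤ j := le_trans hm1N hjm1
  have hb1 : dist (f (π' j)) (f (f^[j] x)) ≤ ε/2 := by
    apply hδ
    rw [dist_comm]
    exact hπ'd j hNj
  have hb2 : dist (f^[j+1] x) (π' (j+1)) ≤ δ := hπ'd (j+1) (by omega)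
  have hfe : f (f^[j] x) = f^[j+1] x := (Function.iterate_succ_apply' f j x).symm
  rw [hfe] at hb1
  calc dist (f (π' j)) (π' (j+1))
      ≤ dist (f (π' j)) (f^[j+1] x) + dist (f^[j+1] x) (π' (j+1)) := dist_triangle _ _ _
    _ ≤ ε/2 + δ := add_le_add hb1 hb2
    _ ≤ ε/2 + ε/2 := by linarith
    _ = ε := by ring
end More

section More2
variable {X : Type*} [MetricSpace X] [CompactSpace X]

lemma iterate_mul_period {f : X → X} {s : X} {q : ℕ} (hq : f^[q] s = s) (t : ℕ) :
    f^[q * t] s = s := by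
  induction t with
  | zero => simp
  | succ m ih => rw [Nat.mul_succ, Function.iterate_add_apply, hq, ih]

lemma iterate_mod_period {f : X → X} {s : X} {q : ℕ} (hq : f^[q] s = s) (k : ℕ) :
    f^[k] s = f^[k % q] s := by
  conv_lhs => rw [← Nat.mod_add_div k q, Function.iterate_add_apply,
    iterate_mul_period hq (k / q)]

lemma range_iterate_finite {f : X → X} {s : X} {q : ℕ} (hq1 : 1 ≤ q) (hq : f^[q] s = s) :
    (Set.range fun k => f^[k] s).Finite := by
  apply Set.Finite.subset ((Set.finite_Iio q).image (fun k => f^[k] s))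
  rintro _ ⟨k, rfl⟩
  exact ⟨k % q, Nat.mod_lt _ hq1, (iterate_mod_period hq k).symm⟩

lemma exists_isolated [Countable X] {C : Set X} (hC : IsClosed C) (hne : C.Nonempty) :
    ∃ s ∈ C, ∃ r > (0:ℝ), ∀ v ∈ C, dist v s < r → v = s := by
  classical
  by_contra h
  push_neg at h
  have hperf : Perfect C := by
    refine ⟨hC, ?_⟩
    intro x hx
    rw [accPt_iff_nhds]
    intro U hU
    obtain ⟨r, hr, hball⟩ := Metric.mem_nhds_iff.1 hU
    obtain ⟨v, hvC, hvd, hvne⟩ := h x hx r hr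
    exact ⟨v, ⟨hball (by simpa [Metric.mem_ball] using hvd), hvC⟩, hvne⟩
  obtain ⟨g, hgr, hgc, hgi⟩ := hperf.exists_nat_bool_injection hne
  have hcnt : Countable (ℕ → Bool) := hgi.countable
  have hinj2 : Function.Injective (fun (S : Set ℕ) => fun n => decide (n ∈ S)) := by
    intro S T hST
    ext n
    have := congrFun hST n
    simpa using this
  have : Countable (Set ℕ) := hinj2.countable
  obtain ⟨e, he⟩ := this.exists_injective_nat'
  exact Function.cantor_injective e he
end More2

section CaseA
variable {X : Type*} [MetricSpace X] [CompactSpace X]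

lemma caseA {f : X → X} {x : X}
    {i j : ℕ} (hij : i < j) (he : f^[i] x = f^[j] x) :
    ∃ y : X, (∃ n, 1 ≤ n ∧ f^[n] y = y) ∧ omegaSet f x = Set.range fun k => f^[k] y := by
  set y := f^[i] x with hy
  set p := j - i with hp
  have hp1 : 1 ≤ p := by omega
  have hpy : f^[p] y = y := by
    rw [hy, ← Function.iterate_add_apply]
    have hpi : p + i = j := by omega
    rw [hpi, ← he]
  refine ⟨y, ⟨p, hp1, hpy⟩, ?_⟩
  apply Set.Subset.antisymm
  · intro z hz
    obtain ⟨φ, hφ, htd⟩ := hz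
    have hcl : z ∈ closure (Set.range fun k => f^[k] y) := by
      rw [Metric.mem_closure_iff]
      intro ε hε
      obtain ⟨K, hK⟩ := Metric.tendsto_atTop.1 htd ε hε
      set k := max K i with hk
      have hik : i ≤ φ k := le_trans (le_max_right _ _) hφ.le_apply
      refine ⟨f^[φ k] x, ⟨φ k - i, ?_⟩, ?_⟩
      · show f^[φ k - i] y = f^[φ k] x
        rw [hy, ← Function.iterate_add_apply]
        congr 1
        omega
      · rw [dist_comm]; exact hK k (le_max_left _ _)
    rwa [((range_iterate_finite hp1 hpy).isClosed).closure_eq] at hcl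
  · rintro _ ⟨k, rfl⟩
    refine ⟨fun m => (k + p * (m+1)) + i, ?_, ?_⟩
    · intro a b hab
      have h1 : p * (a+1) + p = p * (a+2) := by ring
      have h2 : p * (a+2) ≤ p * (b+1) := Nat.mul_le_mul_left p (by omega)
      show (k + p * (a+1)) + i < (k + p * (b+1)) + i
      omega
    · have hconst : ∀ m : ℕ, f^[(k + p * (m+1)) + i] x = f^[k] y := by
        intro m
        rw [Function.iterate_add_apply, ← hy, Function.iterate_add_apply,
          iterate_mul_period hpy]
      simp only [hconst]
      exact tendsto_const_nhds
end CaseA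

section Helpers
variable {X : Type*} [MetricSpace X] [CompactSpace X]

/-- Accumulation predicate on the ω-limit set. -/
def accPred (f : X → X) (x : X) (u : X) : Prop :=
  ∀ ε > (0:ℝ), ∃ v ∈ omegaSet f x, v ≠ u ∧ dist v u < ε

lemma accPred_pull {f : X → X} (hf : Continuous f) {x u : X}
    (huω : u ∈ omegaSet f x) (huA : accPred f x u) :
    ∃ v ∈ omegaSet f x, accPred f x v ∧ f v = u := by
  have hz : ∀ n : ℕ, ∃ zz, zz ∈ omegaSet f x ∧ zz ≠ u ∧ dist zz u < 1/(n+1) := by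
    intro n
    obtain ⟨v, h1, h2, h3⟩ := huA (1/(n+1)) (by positivity)
    exact ⟨v, h1, h2, h3⟩
  choose zs hzsω hzsne hzsd using hz
  have hv : ∀ n : ℕ, ∃ v, v ∈ omegaSet f x ∧ f v = zs n := by
    intro n; obtain ⟨v, h1, h2⟩ := omegaSet_surj hf (hzsω n); exact ⟨v, h1, h2⟩
  choose vs hvsω hvsf using hv
  obtain ⟨v, hvω, ψ', hψ', htv⟩ := (omegaSet_isCompact f x).tendsto_subseq hvsω
  have hfv : f v = u := by
    have hc1 : Filter.Tendsto (fun i => f (vs (ψ' i))) Filter.atTop (𝓝 (f v)) :=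
      (hf.tendsto v).comp htv
    have hc2 : Filter.Tendsto (fun i => f (vs (ψ' i))) Filter.atTop (𝓝 u) := by
      simp only [hvsf]
      rw [Metric.tendsto_atTop]
      intro ε hε
      obtain ⟨M, hM⟩ := exists_one_div_lt hε
      refine ⟨M, fun i hi => ?_⟩
      exact lt_trans (hzsd (ψ' i)) (hM (ψ' i) (le_trans hi hψ'.le_apply))
    exact tendsto_nhds_unique hc1 hc2
  refine ⟨v, hvω, ?_, hfv⟩
  intro ε hε
  obtain ⟨N, hN⟩ := Metric.tendsto_atTop.1 htv ε hε
  refine ⟨vs (ψ' N), hvsω _, ?_, hN N le_rfl⟩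
  intro heq
  exact hzsne (ψ' N) (by rw [← hvsf (ψ' N), heq, hfv])

lemma accPred_pull_iter {f : X → X} (hf : Continuous f) {x : X} (m : ℕ) :
    ∀ u, u ∈ omegaSet f x → accPred f x u →
      ∃ v ∈ omegaSet f x, accPred f x v ∧ f^[m] v = u := by
  induction m with
  | zero => exact fun u h1 h2 => ⟨u, h1, h2, by simp⟩
  | succ k ih =>
    intro u h1 h2
    obtain ⟨v1, hv1ω, hv1A, hv1f⟩ := accPred_pull hf h1 h2
    obtain ⟨v, hvω, hvA, hvf⟩ := ih v1 hv1ω hv1A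
    exact ⟨v, hvω, hvA, by rw [Function.iterate_succ_apply', hvf, hv1f]⟩
end Helpers


theorem stmt_13 {X : Type*} [TopologicalSpace X] [CompactSpace X]
    [TopologicalSpace.MetrizableSpace X] [Countable X]
    (f : X → X) (hf : Continuous f)
    (hacc : ∀ z : X, (𝓝[≠] z).NeBot → ∃ n : ℕ, 1 ≤ n ∧ f^[n] z = z)
    (x : X) :
    ∃ y : X, (∃ n : ℕ, 1 ≤ n ∧ f^[n] y = y) ∧
      {z : X | ∃ φ : ℕ → ℕ, StrictMono φ ∧
        Filter.Tendsto (fun k => f^[φ k] x) Filter.atTop (𝓝 z)} =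
      (Set.range fun k => f^[k] y) := by
  letI : MetricSpace X := TopologicalSpace.metrizableSpaceMetric X
  show ∃ y : X, (∃ n : ℕ, 1 ≤ n ∧ f^[n] y = y) ∧
      omegaSet f x = (Set.range fun k => f^[k] y)
  by_cases hinj : ∀ m n : ℕ, f^[m] x = f^[n] x → m = n
  ·
    have hper : ∀ z ∈ omegaSet f x, ∃ n, 1 ≤ n ∧ f^[n] z = z := by
      intro z hz
      obtain ⟨φ, hφ, htd⟩ := hz
      apply hacc
      rw [← mem_closure_iff_nhdsWithin_neBot, Metric.mem_closure_iff]
      intro ε hε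
      obtain ⟨K, hK⟩ := Metric.tendsto_atTop.1 htd ε hε
      have h1 := hK K le_rfl
      have h2 := hK (K+1) (Nat.le_succ K)
      by_cases hz1 : f^[φ K] x = z
      · refine ⟨f^[φ (K+1)] x, ?_, by rw [dist_comm]; exact h2⟩
        rw [Set.mem_compl_singleton_iff]
        intro heq
        have he1 : φ (K+1) = φ K := hinj _ _ (heq.trans hz1.symm)
        have he2 : φ K < φ (K+1) := hφ (by omega)
        omega
      · exact ⟨f^[φ K] x, Set.mem_compl_singleton_iff.2 hz1,
          by rw [dist_comm]; exact h1⟩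
    obtain ⟨s, hsω, r, hr, hiso⟩ :=
      exists_isolated (omegaSet_isClosed f x) (omegaSet_nonempty f x)
    obtain ⟨q, hq1, hq⟩ := hper s hsω
    have hKfin : (Set.range fun k => f^[k] s).Finite := range_iterate_finite hq1 hq
    have hKω : (Set.range fun k => f^[k] s) ⊆ omegaSet f x := by
      rintro _ ⟨k, rfl⟩; exact omegaSet_maps_iter hf hsω k
    refine ⟨s, ⟨q, hq1, hq⟩, Set.Subset.antisymm ?_ hKω⟩
    by_contra hsub
    obtain ⟨z, hzω, hzK⟩ := Set.not_subset.1 hsub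
    have hjump : ∀ k : ℕ, ∃ w ∈ omegaSet f x, w ∉ (Set.range fun k => f^[k] s) ∧
        ∃ p ∈ (Set.range fun k => f^[k] s), dist (f w) p ≤ 1/(k+1) :=
      fun k => omega_jump hf (Set.range fun k => f^[k] s) hsω ⟨0, by simp⟩ hzω hzK (by positivity)
    choose w hwω hwK p hpK hwp using hjump
    obtain ⟨wst, hwstω, ψ, hψ, htdw⟩ := (omegaSet_isCompact f x).tendsto_subseq hwω
    have hfwK : f wst ∈ (Set.range fun k => f^[k] s) := by
      have hcl : f wst ∈ closure (Set.range fun k => f^[k] s) := by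
        rw [Metric.mem_closure_iff]
        intro ε hε
        have hc1 : Filter.Tendsto (fun i => f (w (ψ i))) Filter.atTop (𝓝 (f wst)) :=
          (hf.tendsto wst).comp htdw
        have hc2 : Filter.Tendsto (fun i => dist (f wst) (f (w (ψ i))))
            Filter.atTop (𝓝 0) := by
          have := hc1.dist (tendsto_const_nhds (x := f wst) (f := Filter.atTop))
          simpa [dist_comm] using this
        obtain ⟨M, hM⟩ := exists_one_div_lt (half_pos hε)
        obtain ⟨i, hi1, hi2⟩ :=
          ((hc2.eventually (gt_mem_nhds (half_pos hε))).and (eventually_ge_atTop M)).exists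
        refine ⟨p (ψ i), hpK _, ?_⟩
        have hb2 : dist (f (w (ψ i))) (p (ψ i)) ≤ 1/(ψ i + 1) := hwp (ψ i)
        have hb3 : (1:ℝ)/(ψ i + 1) < ε/2 := hM (ψ i) (le_trans hi2 hψ.le_apply)
        have hb := dist_triangle (f wst) (f (w (ψ i))) (p (ψ i))
        linarith
      rwa [hKfin.isClosed.closure_eq] at hcl
    obtain ⟨P, hP1, hPw⟩ := hper wst hwstω
    obtain ⟨k0, hk0⟩ := hfwK
    have hwstK : wst = f^[P - 1 + k0] s := by
      have h1 : f^[P] wst = f^[P-1] (f wst) := by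
        conv_lhs => rw [show P = (P-1)+1 by omega]
        rw [Function.iterate_succ_apply]
      calc wst = f^[P] wst := hPw.symm
        _ = f^[P-1] (f wst) := h1
        _ = f^[P-1] (f^[k0] s) := by rw [← hk0]
        _ = f^[P - 1 + k0] s := (Function.iterate_add_apply f _ _ s).symm
    have hwstK' : wst ∈ (Set.range fun k => f^[k] s) := ⟨P - 1 + k0, hwstK.symm⟩
    have hwstAcc : accPred f x wst := by
      intro ε hε
      obtain ⟨N, hN⟩ := Metric.tendsto_atTop.1 htdw ε hε
      exact ⟨w (ψ N), hwω _, fun heq => hwK (ψ N) (by rw [heq]; exact hwstK'),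
        hN N le_rfl⟩
    obtain ⟨v, hvω, hvA, hvf⟩ :=
      accPred_pull_iter hf ((P - 1 + k0) + q) wst hwstω hwstAcc
    obtain ⟨Pv, hPv1, hPv⟩ := hper v hvω
    have hmle : ((P - 1 + k0) + q) ≤ Pv * ((P - 1 + k0) + q) :=
      Nat.le_mul_of_pos_left _ hPv1
    have hvc : v = f^[Pv * ((P - 1 + k0) + q) - ((P - 1 + k0) + q) + (P - 1 + k0)] s := by
      calc v = f^[Pv * ((P - 1 + k0) + q)] v := (iterate_mul_period hPv _).symm
        _ = f^[Pv * ((P - 1 + k0) + q) - ((P - 1 + k0) + q)] (f^[(P - 1 + k0) + q] v) := by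
            rw [← Function.iterate_add_apply]
            congr 1
            omega
        _ = f^[Pv * ((P - 1 + k0) + q) - ((P - 1 + k0) + q)] (f^[P - 1 + k0] s) := by
            rw [hvf, hwstK]
        _ = f^[Pv * ((P - 1 + k0) + q) - ((P - 1 + k0) + q) + (P - 1 + k0)] s :=
            (Function.iterate_add_apply f _ _ s).symm
    have hfinal : s = v := by
      have hk0q : (P - 1 + k0) + 1 ≤ q * ((P - 1 + k0) + 1) :=
        Nat.le_mul_of_pos_left _ hq1
      have hAB : q * ((P - 1 + k0) + 1) + q = q * ((P - 1 + k0) + 2) := by ring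
      calc s = f^[q * ((P - 1 + k0) + 1)] s := (iterate_mul_period hq _).symm
        _ = f^[q * ((P - 1 + k0) + 1) - (P - 1 + k0)] (f^[P - 1 + k0] s) := by
            rw [← Function.iterate_add_apply]
            congr 1
            omega
        _ = f^[q * ((P - 1 + k0) + 1) - (P - 1 + k0)] (f^[(P - 1 + k0) + q] v) := by
            rw [← hwstK, ← hvf]
        _ = f^[(q * ((P - 1 + k0) + 1) - (P - 1 + k0)) + ((P - 1 + k0) + q)] v :=
            (Function.iterate_add_apply f _ _ v).symm
        _ = f^[(q * ((P - 1 + k0) + 1) - (P - 1 + k0)) + ((P - 1 + k0) + q)]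
              (f^[Pv * ((P - 1 + k0) + q) - ((P - 1 + k0) + q) + (P - 1 + k0)] s) := by
            rw [← hvc]
        _ = f^[((q * ((P - 1 + k0) + 1) - (P - 1 + k0)) + ((P - 1 + k0) + q)) +
              (Pv * ((P - 1 + k0) + q) - ((P - 1 + k0) + q) + (P - 1 + k0))] s :=
            (Function.iterate_add_apply f _ _ s).symm
        _ = f^[(Pv * ((P - 1 + k0) + q) - ((P - 1 + k0) + q) + (P - 1 + k0)) +
              q * ((P - 1 + k0) + 2)] s := by
            congr 1
            omega
        _ = f^[Pv * ((P - 1 + k0) + q) - ((P - 1 + k0) + q) + (P - 1 + k0)]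
              (f^[q * ((P - 1 + k0) + 2)] s) := Function.iterate_add_apply f _ _ s
        _ = f^[Pv * ((P - 1 + k0) + q) - ((P - 1 + k0) + q) + (P - 1 + k0)] s := by
            rw [iterate_mul_period hq]
        _ = v := hvc.symm
    have hAccs : accPred f x s := by rw [hfinal]; exact hvA
    obtain ⟨vbad, hvbadω, hvbadne, hvbadd⟩ := hAccs r hr
    exact hvbadne (hiso vbad hvbadω hvbadd)
  · push_neg at hinj
    obtain ⟨m, n, he, hne⟩ := hinj
    rcases Nat.lt_or_ge m n with h | h
    · exact caseA h he
    · have h2 : n < m := by omega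
      exact caseA h2 he.symm
end

section
/- Let X be a compact metrizable countable space, f : X → X continuous, and suppose every accumulation point of X is a periodic point of f. If x is an accumulation point of X with f(x) = x, then either the p-iterate f^p is continuous at x for every free ultrafilter p on ℕ, or f^p is discontinuous at x for every free ultrafilter p on ℕ. -/
open Filter Topology

/-- The `p`-iterate `f^p` of a map `f`, defined as the `p`-limit of the
sequence of iterates `(f^k x)_k` (a genuine limit when `X` is compact Hausdorff). -/
noncomputable def pIter {X : Type*} [TopologicalSpace X] (f : X → X)
    (p : Ultrafilter ℕ) (x : X) : X :=
  (p.map fun k => f^[k] x).lim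

open Set
set_option linter.unusedVariables false
set_option linter.unusedSectionVars false
section Aux
variable {X : Type*} [MetricSpace X] [CompactSpace X]

private lemma exists_ultra_lim (g : ℕ → X) (𝒰 : Ultrafilter ℕ) : ∃ c, Tendsto g ↑𝒰 (𝓝 c) := by
  obtain ⟨c, -, hc⟩ := isCompact_univ.ultrafilter_le_nhds (𝒰.map g)
    (by simp [Filter.le_principal_iff])
  exact ⟨c, hc⟩

private lemma tendsto_pIter (f : X → X) (p : Ultrafilter ℕ) (z : X) :
    Tendsto (fun k => f^[k] z) ↑p (𝓝 (pIter f p z)) :=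
  (p.map fun k => f^[k] z).le_nhds_lim

private lemma pIter_fixed (f : X → X) (p : Ultrafilter ℕ) {x : X} (hfix : f x = x) :
    pIter f p x = x := by
  have h2 : Tendsto (fun k : ℕ => f^[k] x) ↑p (𝓝 x) := by
    have he : (fun k : ℕ => f^[k] x) = fun _ => x :=
      funext fun k => Function.iterate_fixed hfix k
    rw [he]; exact tendsto_const_nhds
  exact tendsto_nhds_unique (tendsto_pIter f p x) h2

private lemma mem_of_tendsto_clopen {U : Set X} (hU : IsClopen U) {g : ℕ → X}
    {𝒰 : Ultrafilter ℕ} {c : X} (h : Tendsto g ↑𝒰 (𝓝 c)) :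
    c ∈ U ↔ {k | g k ∈ U} ∈ 𝒰 := by
  constructor
  · intro hc
    exact h (hU.isOpen.mem_nhds hc)
  · intro hs
    by_contra hc
    have h2 : {k | g k ∈ Uᶜ} ∈ 𝒰 := h (hU.compl.isOpen.mem_nhds hc)
    obtain ⟨k, hk⟩ := Ultrafilter.nonempty_of_mem (Filter.inter_mem hs h2)
    exact hk.2 hk.1

private lemma isolated_singleton {c : X} (h : ¬ (𝓝[≠] c).NeBot) : {c} ∈ 𝓝 c := by
  rw [not_neBot] at h
  have h2 : ∅ ∈ 𝓝[≠] c := by rw [h]; exact mem_bot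
  rw [mem_nhdsWithin] at h2
  obtain ⟨U, hUo, hcU, hsub⟩ := h2
  refine mem_of_superset (hUo.mem_nhds hcU) (fun y hy => ?_)
  by_contra hne
  exact hsub ⟨hy, hne⟩

private lemma infinite_of_mem {p : Ultrafilter ℕ} (hp : ↑p ≤ @cofinite ℕ) {s : Set ℕ}
    (hs : s ∈ p) : s.Infinite := by
  intro hfin
  have h2 : sᶜ ∈ p := hp hfin.compl_mem_cofinite
  obtain ⟨k, hk⟩ := Ultrafilter.nonempty_of_mem (Filter.inter_mem hs h2)
  exact hk.2 hk.1

private lemma periodic_pIter (f : X → X)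
    (hacc : ∀ z : X, (𝓝[≠] z).NeBot → ∃ n : ℕ, 1 ≤ n ∧ f^[n] z = z)
    (p : Ultrafilter ℕ) (hp : ↑p ≤ @cofinite ℕ) (z : X) :
    ∃ n, 1 ≤ n ∧ f^[n] (pIter f p z) = pIter f p z := by
  set c := pIter f p z with hc
  by_cases hacc' : (𝓝[≠] c).NeBot
  · exact hacc c hacc'
  · have hsing := isolated_singleton hacc'
    have hmem : {k | f^[k] z = c} ∈ p := by
      have h2 := (tendsto_pIter f p z) hsing
      simpa [Set.preimage, Set.mem_singleton_iff] using h2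
    have hinf := infinite_of_mem hp hmem
    obtain ⟨k1, hk1⟩ := hinf.nonempty
    obtain ⟨k2, hk2, hgt⟩ := hinf.exists_gt k1
    refine ⟨k2 - k1, by omega, ?_⟩
    have : f^[k2 - k1 + k1] z = c := by rw [show k2 - k1 + k1 = k2 by omega]; exact hk2
    rw [← hk1, ← Function.iterate_add_apply, this]
    exact (show f^[k1] z = c from hk1).symm

private lemma iterate_mul_fixed (f : X → X) {w : X} {n : ℕ} (h : f^[n] w = w) :
    ∀ k, f^[k * n] w = w := by
  intro k
  induction k with
  | zero => simp
  | succ k ih => rw [Nat.succ_mul, Function.iterate_add_apply, h, ih]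

private lemma chain_absurd (f : X → X) (hfc : Continuous f)
    (hacc : ∀ z : X, (𝓝[≠] z).NeBot → ∃ n : ℕ, 1 ≤ n ∧ f^[n] z = z)
    (𝒰 : Ultrafilter ℕ)
    {U : Set X} (hU : IsClopen U)
    (y : ℕ → X) (e : ℕ → ℕ)
    (he : ∀ j, {i | j ≤ e i} ∈ 𝒰)
    (h0 : ∀ i, f^[e i] (y i) ∉ U)
    (h1 : ∀ j, 1 ≤ j → {i | f^[e i - j] (y i) ∈ U} ∈ 𝒰)
    (hper : ∀ j c, {i | f^[e i - j] (y i) = c} ∈ 𝒰 → ∃ n, 1 ≤ n ∧ f^[n] c = c) :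
    False := by
  have hlim : ∀ j : ℕ, ∃ c, Tendsto (fun i => f^[e i - j] (y i)) ↑𝒰 (𝓝 c) :=
    fun j => exists_ultra_lim _ 𝒰
  choose u hu using hlim
  have hchain : ∀ j, f (u (j + 1)) = u j := by
    intro j
    have t1 : Tendsto (fun i => f (f^[e i - (j + 1)] (y i))) ↑𝒰 (𝓝 (f (u (j + 1)))) :=
      ((hfc.tendsto _).comp (hu (j + 1)))
    have t2 : Tendsto (fun i => f^[e i - j] (y i)) ↑𝒰 (𝓝 (f (u (j + 1)))) := by
      apply t1.congr'
      filter_upwards [he (j + 1)] with i hi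
      have h3 : (e i - (j + 1)) + 1 = e i - j := by omega
      rw [← h3, Function.iterate_succ_apply']
    exact tendsto_nhds_unique t2 (hu j)
  have hmemU : ∀ j, 1 ≤ j → u j ∈ U := fun j hj =>
    (mem_of_tendsto_clopen hU (hu j)).2 (h1 j hj)
  have hnotU : u 0 ∉ U := by
    intro h
    have h2 := (mem_of_tendsto_clopen hU (hu 0)).1 h
    obtain ⟨i, hi⟩ := Ultrafilter.nonempty_of_mem h2
    exact h0 i (by simpa using hi)
  have hperu : ∀ j, ∃ n, 1 ≤ n ∧ f^[n] (u j) = u j := by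
    intro j
    by_cases hacc' : (𝓝[≠] (u j)).NeBot
    · exact hacc _ hacc'
    · have hsing := isolated_singleton hacc'
      refine hper j (u j) ?_
      have h2 := (hu j) hsing
      simpa [Set.preimage, Set.mem_singleton_iff] using h2
  choose n hn1 hnp using hperu
  have hshift : ∀ s t, f^[s] (u (t + s)) = u t := by
    intro s
    induction s with
    | zero => intro t; simp
    | succ s ih =>
      intro t
      have h3 : t + (s + 1) = (t + s) + 1 := rfl
      rw [h3, Function.iterate_succ_apply, hchain (t + s), ih t]
  have hshift0 : ∀ j, f^[j] (u j) = u 0 := by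
    intro j
    have := hshift j 0
    simpa using this
  have hper0 : ∀ j, f^[n j] (u 0) = u 0 := by
    intro j
    calc f^[n j] (u 0) = f^[n j] (f^[j] (u j)) := by rw [hshift0 j]
    _ = f^[n j + j] (u j) := (Function.iterate_add_apply f (n j) j (u j)).symm
    _ = f^[j + n j] (u j) := by rw [Nat.add_comm]
    _ = f^[j] (f^[n j] (u j)) := Function.iterate_add_apply f j (n j) (u j)
    _ = f^[j] (u j) := by rw [hnp j]
    _ = u 0 := hshift0 j
  have horbit : ∀ j, u j = f^[j * n j - j] (u 0) := by
    intro j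
    have hle : j ≤ j * n j := Nat.le_mul_of_pos_right j (hn1 j)
    calc u j = f^[j * n j] (u j) := (iterate_mul_fixed f (hnp j) j).symm
    _ = f^[(j * n j - j) + j] (u j) := by rw [show j * n j - j + j = j * n j by omega]
    _ = f^[j * n j - j] (f^[j] (u j)) := Function.iterate_add_apply f _ j (u j)
    _ = f^[j * n j - j] (u 0) := by rw [hshift0 j]
  have hmod : ∀ m, f^[m] (u 0) = f^[m % n 0] (u 0) := by
    intro m
    conv_lhs => rw [← Nat.mod_add_div m (n 0)]
    rw [Function.iterate_add_apply]
    congr 1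
    rw [Nat.mul_comm]
    exact iterate_mul_fixed f (hper0 0) (m / n 0)
  have hfin : ∀ j, u j = f^[(j * n j - j) % n 0] (u 0) := fun j => (horbit j).trans (hmod _)
  have hltn : ∀ j, (j * n j - j) % n 0 < n 0 := fun j => Nat.mod_lt _ (hn1 0)
  obtain ⟨a, b, hab, heq⟩ :=
    Finite.exists_ne_map_eq_of_infinite (fun j : ℕ => (⟨_, hltn j⟩ : Fin (n 0)))
  have key : ∀ a b : ℕ, a < b → u a = u b → False := by
    intro a b hlt' huab
    have h2 : f^[a] (u b) = u (b - a) := by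
      have h3 := hshift a (b - a)
      rwa [show b - a + a = b by omega] at h3
    have h3 : u (b - a) = u 0 := by
      rw [← h2, ← huab, hshift0 a]
    exact hnotU (h3 ▸ hmemU (b - a) (by omega))
  have hval : u a = u b := by
    rw [hfin a, hfin b]
    have := congrArg Fin.val heq
    simp only at this
    rw [this]
  rcases hab.lt_or_gt with h | h
  · exact key a b h hval
  · exact key b a h hval.symm

private lemma exists_clopen_ball [Countable X] (x : X) {ε : ℝ} (hε : 0 < ε) :
    ∃ r : ℝ, 0 < r ∧ r < ε ∧ IsClopen (Metric.ball x r) := by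
  have hcnt : (Set.range fun z : X => dist z x).Countable := Set.countable_range _
  have hIoo : ¬ (Set.Ioo (0 : ℝ) ε).Countable := by
    intro h
    have h1 : (Cardinal.mk (Set.Ioo (0 : ℝ) ε)) ≤ Cardinal.aleph0 :=
      Cardinal.mk_le_aleph0_iff.2 h.to_subtype
    rw [Cardinal.mk_Ioo_real hε] at h1
    exact absurd h1 (not_le.2 Cardinal.aleph0_lt_continuum)
  have hsub : ¬ (Set.Ioo (0 : ℝ) ε ⊆ Set.range fun z : X => dist z x) := fun h =>
    hIoo (hcnt.mono h)
  rw [Set.not_subset] at hsub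
  obtain ⟨r, hrIoo, hrno⟩ := hsub
  have hballs : Metric.ball x r = Metric.closedBall x r := by
    ext z
    simp only [Metric.mem_ball, Metric.mem_closedBall]
    constructor
    · exact le_of_lt
    · intro hle
      rcases lt_or_eq_of_le hle with h | h
      · exact h
      · exact absurd ⟨z, h⟩ hrno
  exact ⟨r, hrIoo.1, hrIoo.2, by rw [hballs]; exact ⟨Metric.isClosed_closedBall, by
    rw [← hballs]; exact Metric.isOpen_ball⟩⟩

private lemma periodic_stable [Countable X] (f : X → X) (hfc : Continuous f)
    (hacc : ∀ z : X, (𝓝[≠] z).NeBot → ∃ n : ℕ, 1 ≤ n ∧ f^[n] z = z)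
    (x : X) (hfix : f x = x)
    (𝒰 : Ultrafilter ℕ) (h𝒰 : ↑𝒰 ≤ @cofinite ℕ)
    {K : Set X} (hK : IsClopen K) (hxK : x ∈ K) :
    ∃ W : Set X, IsClopen W ∧ x ∈ W ∧ W ⊆ K ∧
      ∀ w ∈ W, ∀ n, 1 ≤ n → f^[n] w = w → ∀ m, f^[m] w ∈ K := by
  classical
  by_contra hcon
  push_neg at hcon
  obtain ⟨ε, hε, hballK⟩ := Metric.mem_nhds_iff.1 (hK.isOpen.mem_nhds hxK)
  have hWex : ∀ i : ℕ, ∃ w : X, (w ∈ K ∧ dist w x < 1 / (i + 1 : ℝ)) ∧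
      ∃ nn, 1 ≤ nn ∧ f^[nn] w = w ∧ ∃ m, f^[m] w ∉ K := by
    intro i
    have hpos : (0 : ℝ) < min ε (1 / (i + 1 : ℝ)) := by
      apply lt_min hε
      positivity
    obtain ⟨r, hr0, hrlt, hclopen⟩ := exists_clopen_ball x hpos
    have hsubK : Metric.ball x r ⊆ K := fun z hz =>
      hballK (Metric.ball_subset_ball (le_trans hrlt.le (min_le_left _ _)) hz)
    obtain ⟨w, hwW, nn, hnn1, hnnw, m, hm⟩ :=
      hcon (Metric.ball x r) hclopen (Metric.mem_ball_self hr0) hsubK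
    refine ⟨w, ⟨hsubK hwW, ?_⟩, nn, hnn1, hnnw, m, hm⟩
    calc dist w x < r := hwW
    _ ≤ 1 / (i + 1 : ℝ) := le_trans hrlt.le (min_le_right _ _)
  choose w hw nn hnn1 hnnw hmex using hWex
  have hwK : ∀ i, w i ∈ K := fun i => (hw i).1
  have hwx : Tendsto w atTop (𝓝 x) := by
    rw [tendsto_iff_dist_tendsto_zero]
    apply squeeze_zero (fun i => dist_nonneg) (fun i => (hw i).2.le)
    exact tendsto_one_div_add_atTop_nhds_zero_nat
  let e : ℕ → ℕ := fun i => Nat.find (hmex i)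
  have he0 : ∀ i, f^[e i] (w i) ∉ K := fun i => Nat.find_spec (hmex i)
  have hemin : ∀ i m', m' < e i → f^[m'] (w i) ∈ K := by
    intro i m' hlt
    have h2 := Nat.find_min (hmex i) (show m' < Nat.find (hmex i) from hlt)
    simpa using h2
  have heatTop : ∀ j, ∀ᶠ i in atTop, j ≤ e i := by
    intro j
    have hall : ∀ᶠ i in atTop, ∀ m' ∈ Finset.range j, f^[m'] (w i) ∈ K := by
      rw [eventually_all_finset]
      intro m' _
      have ht : Tendsto (fun i => f^[m'] (w i)) atTop (𝓝 x) := by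
        have h2 := ((hfc.iterate m').tendsto x).comp hwx
        rwa [Function.iterate_fixed hfix] at h2
      exact ht (hK.isOpen.mem_nhds hxK)
    filter_upwards [hall] with i hi
    by_contra hlt
    push_neg at hlt
    exact he0 i (hi (e i) (Finset.mem_range.2 hlt))
  have hcofmem : ∀ s : Set ℕ, (∀ᶠ i in atTop, i ∈ s) → s ∈ 𝒰 := by
    intro s hs
    apply h𝒰
    rw [Nat.cofinite_eq_atTop]
    have h2 := Filter.eventually_iff.1 hs
    rwa [Set.setOf_mem_eq] at h2
  refine chain_absurd f hfc hacc 𝒰 hK w e ?_ he0 ?_ ?_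
  · intro j
    exact hcofmem _ (heatTop j)
  · intro j hj
    apply hcofmem
    filter_upwards [heatTop j] with i hi
    exact hemin i (e i - j) (by omega)
  · intro j c hc
    obtain ⟨i, hi⟩ := Ultrafilter.nonempty_of_mem hc
    have hi' : f^[e i - j] (w i) = c := hi
    refine ⟨nn i, hnn1 i, ?_⟩
    rw [← hi', ← Function.iterate_add_apply, Nat.add_comm, Function.iterate_add_apply,
      hnnw i]

private lemma core [Countable X] (f : X → X) (hfc : Continuous f)
    (hacc : ∀ z : X, (𝓝[≠] z).NeBot → ∃ n : ℕ, 1 ≤ n ∧ f^[n] z = z)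
    (x : X) (hfix : f x = x)
    (p q : Ultrafilter ℕ) (hp : ↑p ≤ @cofinite ℕ) (hq : ↑q ≤ @cofinite ℕ)
    (hqc : ContinuousAt (pIter f q) x)
    {K : Set X} (hK : IsClopen K) (hxK : x ∈ K) :
    ∀ᶠ z in 𝓝 x, pIter f p z ∈ K := by
  classical
  obtain ⟨W, hWc, hxW, hWK, hWper⟩ := periodic_stable f hfc hacc x hfix p hp hK hxK
  obtain ⟨W', hW'c, hxW', hW'W, hW'per⟩ := periodic_stable f hfc hacc x hfix p hp hWc hxW
  have hq0 : pIter f q x = x := pIter_fixed f q hfix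
  have hU : (pIter f q) ⁻¹' W' ∈ 𝓝 x := by
    apply hqc
    rw [hq0]
    exact hW'c.isOpen.mem_nhds hxW'
  filter_upwards [hU] with z hz
  by_contra hd
  obtain ⟨nc, hnc1, hncp⟩ := periodic_pIter f hacc q hq z
  obtain ⟨nd, hnd1, hndp⟩ := periodic_pIter f hacc p hp z
  set c := pIter f q z with hcdef
  set d := pIter f p z with hddef
  have hcW : ∀ a, f^[a] c ∈ W := fun a => hW'per c hz nc hnc1 hncp a
  have hdW : ∀ a, f^[a] d ∉ W := by
    intro a haW
    have hper' : f^[nd] (f^[a] d) = f^[a] d := by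
      rw [← Function.iterate_add_apply, Nat.add_comm, Function.iterate_add_apply, hndp]
    have horb := hWper _ haW nd hnd1 hper'
    have hda : f^[a * nd - a] (f^[a] d) ∈ K := horb _
    have heq : f^[a * nd - a] (f^[a] d) = d := by
      rw [← Function.iterate_add_apply]
      have h1 : a ≤ a * nd := Nat.le_mul_of_pos_right a hnd1
      rw [show a * nd - a + a = a * nd by omega]
      exact iterate_mul_fixed f hndp a
    exact hd (heq ▸ hda)
  have htq := tendsto_pIter f q z
  have htp := tendsto_pIter f p z
  have hSq : ∀ j, {k | f^[j + k] z ∈ W} ∈ q := by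
    intro j
    have t : Tendsto (fun k => f^[j + k] z) ↑q (𝓝 (f^[j] c)) := by
      have h2 := ((hfc.iterate j).tendsto c).comp htq
      exact h2.congr (fun k => (Function.iterate_add_apply f j k z).symm)
    exact t (hWc.isOpen.mem_nhds (hcW j))
  have hSp : ∀ j, {k | f^[j + k] z ∈ W} ∉ p := by
    intro j
    have t : Tendsto (fun k => f^[j + k] z) ↑p (𝓝 (f^[j] d)) := by
      have h2 := ((hfc.iterate j).tendsto d).comp htp
      exact h2.congr (fun k => (Function.iterate_add_apply f j k z).symm)
    have hmem : {k | f^[j + k] z ∈ Wᶜ} ∈ p := t (hWc.compl.isOpen.mem_nhds (hdW j))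
    intro hmem2
    obtain ⟨k, hk⟩ := Ultrafilter.nonempty_of_mem (Filter.inter_mem hmem hmem2)
    exact hk.1 hk.2
  have hb : ∀ L : ℕ, ∃ bb : ℕ, ∀ j ≤ L, f^[j + bb] z ∈ W := by
    intro L
    have h2 : (⋂ j ∈ Finset.range (L + 1), {k | f^[j + k] z ∈ W}) ∈ q :=
      (Filter.biInter_finset_mem _).2 (fun j _ => hSq j)
    obtain ⟨bb, hbb⟩ := Ultrafilter.nonempty_of_mem h2
    rw [Set.mem_iInter₂] at hbb
    exact ⟨bb, fun j hj => hbb j (Finset.mem_range.2 (by omega))⟩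
  choose b hbrun using hb
  have hNotW : {m : ℕ | f^[m] z ∉ W}.Infinite := by
    have h0' := hSp 0
    have h2 : {k | f^[0 + k] z ∈ W}ᶜ ∈ p := Ultrafilter.compl_mem_iff_notMem.mpr h0'
    have hinf := infinite_of_mem hp h2
    apply hinf.mono
    intro m hm
    simpa using hm
  have hex : ∀ L, ∃ m', b L ≤ m' ∧ f^[m'] z ∉ W := by
    intro L
    obtain ⟨m', hm', hgt⟩ := hNotW.exists_gt (b L)
    exact ⟨m', hgt.le, hm'⟩
  let e : ℕ → ℕ := fun L => Nat.find (hex L)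
  have he0 : ∀ L, f^[e L] z ∉ W := fun L => (Nat.find_spec (hex L)).2
  have hebL : ∀ L, b L ≤ e L := fun L => (Nat.find_spec (hex L)).1
  have hemin : ∀ L m', b L ≤ m' → m' < e L → f^[m'] z ∈ W := by
    intro L m' hbm hme
    have h2 := Nat.find_min (hex L) (show m' < Nat.find (hex L) from hme)
    by_contra hWn
    exact h2 ⟨hbm, hWn⟩
  have hegt : ∀ L, b L + L < e L := by
    intro L
    by_contra hle
    push_neg at hle
    have hj : e L - b L ≤ L := by
      have := hebL L
      omega
    have h2 := hbrun L (e L - b L) hj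
    have hble := hebL L
    rw [show (e L - b L) + b L = e L by omega] at h2
    exact he0 L h2
  have hcofmem : ∀ s : Set ℕ, (∀ᶠ i in atTop, i ∈ s) → s ∈ p := by
    intro s hs
    apply hp
    rw [Nat.cofinite_eq_atTop]
    have h2 := Filter.eventually_iff.1 hs
    rwa [Set.setOf_mem_eq] at h2
  refine chain_absurd f hfc hacc p hWc (fun _ => z) e ?_ he0 ?_ ?_
  · intro j
    apply hcofmem
    filter_upwards [eventually_ge_atTop j] with L hL
    have := hegt L
    omega
  · intro j hj
    apply hcofmem
    filter_upwards [eventually_ge_atTop j] with L hL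
    have h2 := hegt L
    have h3 := hebL L
    exact hemin L (e L - j) (by omega) (by omega)
  · intro j c' hc'
    have hinf' := infinite_of_mem hp hc'
    obtain ⟨L1, hL1mem, hL1gt⟩ := hinf'.exists_gt j
    obtain ⟨L2, hL2mem, hL2gt⟩ := hinf'.exists_gt (e L1)
    have hL1mem' : f^[e L1 - j] z = c' := hL1mem
    have hL2mem' : f^[e L2 - j] z = c' := hL2mem
    have h1 : j < e L1 := by have := hegt L1; omega
    have h2 : e L1 < e L2 := by have := hegt L2; omega
    refine ⟨(e L2 - j) - (e L1 - j), by omega, ?_⟩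
    rw [← hL1mem', ← Function.iterate_add_apply,
      show (e L2 - j) - (e L1 - j) + (e L1 - j) = e L2 - j by omega]
    rw [hL2mem', hL1mem']

end Aux

theorem stmt_14 {X : Type*} [TopologicalSpace X] [CompactSpace X]
    [TopologicalSpace.MetrizableSpace X] [Countable X]
    (f : X → X) (hf : Continuous f)
    (hacc : ∀ z : X, (𝓝[≠] z).NeBot → ∃ n : ℕ, 1 ≤ n ∧ f^[n] z = z)
    (x : X) (hx : (𝓝[≠] x).NeBot) (hfix : f x = x) :
    (∀ p : Ultrafilter ℕ, (p : Filter ℕ) ≤ Filter.cofinite →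
        ContinuousAt (pIter f p) x) ∨
    (∀ p : Ultrafilter ℕ, (p : Filter ℕ) ≤ Filter.cofinite →
        ¬ ContinuousAt (pIter f p) x) := by
  letI : MetricSpace X := TopologicalSpace.metrizableSpaceMetric X
  by_cases h : ∃ q : Ultrafilter ℕ, (↑q : Filter ℕ) ≤ Filter.cofinite ∧
      ContinuousAt (pIter f q) x
  · obtain ⟨q, hq, hqc⟩ := h
    left
    intro p hp
    rw [ContinuousAt, pIter_fixed f p hfix, Filter.tendsto_def]
    intro V hV
    obtain ⟨ε, hε, hball⟩ := Metric.mem_nhds_iff.1 hV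
    obtain ⟨r, hr0, hrε, hclopen⟩ := exists_clopen_ball x hε
    have hcore := core f hf hacc x hfix p q hp hq hqc hclopen (Metric.mem_ball_self hr0)
    filter_upwards [hcore] with z hz
    exact hball (Metric.ball_subset_ball hrε.le hz)
  · right
    intro p hp hcont
    exact h ⟨p, hp, hcont⟩
end

section
/- Let X be a compact metrizable space, f : X → X continuous, and suppose every accumulation point of X is a periodic point of f. Let p be a free ultrafilter on ℕ. If the p-iterate f^p is continuous at an accumulation point x of X, then f^p is continuous at every point of the orbit O_f(x). -/
open Filter Topology

lemma pIter_tendsto {X : Type*} [TopologicalSpace X] [CompactSpace X] (f : X → X)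
    (p : Ultrafilter ℕ) (z : X) :
    Tendsto (fun k => f^[k] z) p (𝓝 (pIter f p z)) :=
  Ultrafilter.le_nhds_lim _

lemma pIter_comm {X : Type*} [TopologicalSpace X] [CompactSpace X] [T2Space X]
    (f : X → X) (hf : Continuous f) (p : Ultrafilter ℕ) (m : ℕ) (z : X) :
    pIter f p (f^[m] z) = f^[m] (pIter f p z) := by
  have h1 : Tendsto (fun k => f^[k] (f^[m] z)) p (𝓝 (f^[m] (pIter f p z))) := by
    have h2 : Tendsto (fun k => f^[m] (f^[k] z)) p (𝓝 (f^[m] (pIter f p z))) :=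
      ((hf.iterate m).continuousAt.tendsto).comp (pIter_tendsto f p z)
    have h3 : (fun k => f^[k] (f^[m] z)) = fun k => f^[m] (f^[k] z) := by
      funext k
      rw [← Function.iterate_add_apply, ← Function.iterate_add_apply, Nat.add_comm]
    rw [h3]; exact h2
  exact tendsto_nhds_unique (pIter_tendsto f p (f^[m] z)) h1

/-- `pIter f p z` is always a periodic point. -/
lemma pIter_periodic {X : Type*} [TopologicalSpace X] [CompactSpace X] [T2Space X]
    (f : X → X)
    (hacc : ∀ z : X, (𝓝[≠] z).NeBot → ∃ n : ℕ, 1 ≤ n ∧ f^[n] z = z)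
    (p : Ultrafilter ℕ) (hp : (p : Filter ℕ) ≤ Filter.cofinite) (z : X) :
    ∃ s : ℕ, 1 ≤ s ∧ f^[s] (pIter f p z) = pIter f p z := by
  set L := pIter f p z with hL
  by_cases h : (𝓝[≠] L).NeBot
  · exact hacc L h
  · have hbot : 𝓝[≠] L = ⊥ := not_neBot.mp h
    have hsing : {L} ∈ 𝓝 L := by
      have hmem : (∅ : Set X) ∈ 𝓝[≠] L := by rw [hbot]; exact mem_bot
      rw [nhdsWithin, mem_inf_principal] at hmem
      have : {a : X | a ∈ ({L}ᶜ : Set X) → a ∈ (∅ : Set X)} = {L} := by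
        ext a
        by_cases ha : a = L <;> simp [ha]
      rwa [this] at hmem
    have hS : {k | f^[k] z = L} ∈ p := pIter_tendsto f p z hsing
    have hinf : {k | f^[k] z = L}.Infinite := by
      intro hfin
      have : {k | f^[k] z = L}ᶜ ∈ p := hp hfin.compl_mem_cofinite
      exact (Ultrafilter.compl_notMem_iff.mpr hS) this
    obtain ⟨i, hi⟩ := hinf.nonempty
    obtain ⟨i', hi', hlt⟩ := hinf.exists_gt i
    refine ⟨i' - i, by omega, ?_⟩
    have : f^[i' - i] (f^[i] z) = f^[i'] z := by
      rw [← Function.iterate_add_apply]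
      congr 1
      omega
    rw [← hi, this, hi']
    exact hi.symm

theorem stmt_15 {X : Type*} [TopologicalSpace X] [CompactSpace X]
    [TopologicalSpace.MetrizableSpace X]
    (f : X → X) (hf : Continuous f)
    (hacc : ∀ z : X, (𝓝[≠] z).NeBot → ∃ n : ℕ, 1 ≤ n ∧ f^[n] z = z)
    (p : Ultrafilter ℕ) (hp : (p : Filter ℕ) ≤ Filter.cofinite)
    (x : X) (hx : (𝓝[≠] x).NeBot) (hcont : ContinuousAt (pIter f p) x) :
    ∀ y ∈ (Set.range fun k => f^[k] x), ContinuousAt (pIter f p) y := by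
  haveI : T2Space X := inferInstance
  rintro y ⟨k, rfl⟩
  obtain ⟨n, hn1, hnx⟩ := hacc x hx
  set g := pIter f p with hg
  have hcomm : ∀ (m : ℕ) (z : X), g (f^[m] z) = f^[m] (g z) := pIter_comm f hf p
  -- choose j ≥ 1 with f^[j] (f^[k] x) = x
  set j := n * (k + 1) - k with hjdef
  have hk1 : k + 1 ≤ n * (k + 1) := Nat.le_mul_of_pos_left _ hn1
  have hjk : j + k = n * (k + 1) := Nat.sub_add_cancel (by omega)
  have hj1 : 1 ≤ j := by omega
  have hfixt : ∀ t : ℕ, f^[n * t] x = x := by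
    intro t
    rw [Function.iterate_mul]
    exact Function.iterate_fixed hnx t
  have hjy : f^[j] (f^[k] x) = x := by
    rw [← Function.iterate_add_apply, hjk, hfixt]
  have hgx_fix : f^[n] (g x) = g x := by rw [← hcomm, hnx]
  have hy_fix : f^[n] (f^[k] x) = f^[k] x := by
    rw [← Function.iterate_add_apply, Nat.add_comm, Function.iterate_add_apply, hnx]
  have hgy_fix : f^[n] (g (f^[k] x)) = g (f^[k] x) := by rw [← hcomm, hy_fix]
  have hjgy : f^[j] (g (f^[k] x)) = g x := by rw [← hcomm, hjy]
  rw [ContinuousAt, Filter.tendsto_iff_ultrafilter]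
  intro q hq
  have hLlim : Tendsto g (q : Filter X) (𝓝 ((q.map g).lim)) := Ultrafilter.le_nhds_lim (q.map g)
  set L := (q.map g).lim with hLdef
  suffices hL : L = g (f^[k] x) by rw [← hL]; exact hLlim
  have h1 : Tendsto (fun w => f^[j] (g w)) (q : Filter X) (𝓝 (f^[j] L)) :=
    ((hf.iterate j).continuousAt.tendsto).comp hLlim
  have h2 : Tendsto (fun w => g (f^[j] w)) (q : Filter X) (𝓝 (g x)) := by
    have hA : Tendsto f^[j] (q : Filter X) (𝓝 x) := by
      have hB : Tendsto f^[j] (𝓝 (f^[k] x)) (𝓝 x) := by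
        have := (hf.iterate j).tendsto (f^[k] x)
        rwa [hjy] at this
      exact hB.comp hq
    exact hcont.tendsto.comp hA
  have h12 : (fun w => g (f^[j] w)) = fun w => f^[j] (g w) := funext fun w => hcomm j w
  rw [h12] at h2
  have hjL : f^[j] L = g x := tendsto_nhds_unique h1 h2
  obtain ⟨s, hs1, hsL⟩ : ∃ s : ℕ, 1 ≤ s ∧ f^[s] L = L := by
    by_cases hacc' : (𝓝[≠] L).NeBot
    · exact hacc L hacc'
    · have hbot : 𝓝[≠] L = ⊥ := not_neBot.mp hacc'
      have hsing : {L} ∈ 𝓝 L := by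
        have hmem : (∅ : Set X) ∈ 𝓝[≠] L := by rw [hbot]; exact mem_bot
        rw [nhdsWithin, mem_inf_principal] at hmem
        have : {a : X | a ∈ ({L}ᶜ : Set X) → a ∈ (∅ : Set X)} = {L} := by
          ext a
          by_cases ha : a = L <;> simp [ha]
        rwa [this] at hmem
      have hpre : g ⁻¹' {L} ∈ (q : Filter X) := hLlim hsing
      obtain ⟨w, hw⟩ := Filter.nonempty_of_mem hpre
      have hw' : g w = L := hw
      have := pIter_periodic f hacc p hp w
      rw [← hg, hw'] at this
      exact this
  have hjs : j ≤ j * s := Nat.le_mul_of_pos_right _ hs1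
  have hLform : L = f^[j * s - j] (g x) := by
    have h3 : f^[j * s] L = L := by
      rw [Nat.mul_comm, Function.iterate_mul]
      exact Function.iterate_fixed hsL j
    calc L = f^[j * s] L := h3.symm
      _ = f^[j * s - j] (f^[j] L) := by
          rw [← Function.iterate_add_apply]
          congr 1
          omega
      _ = f^[j * s - j] (g x) := by rw [hjL]
  have hLfix : f^[n] L = L := by
    rw [hLform, ← Function.iterate_add_apply, Nat.add_comm, Function.iterate_add_apply,
      hgx_fix]
  have hjn : j ≤ n * j := Nat.le_mul_of_pos_left _ hn1
  calc L = f^[n * j] L := by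
        rw [Function.iterate_mul]
        exact (Function.iterate_fixed hLfix j).symm
    _ = f^[n * j - j] (f^[j] L) := by
        rw [← Function.iterate_add_apply]
        congr 1
        omega
    _ = f^[n * j - j] (f^[j] (g (f^[k] x))) := by rw [hjL, hjgy]
    _ = f^[n * j] (g (f^[k] x)) := by
        rw [← Function.iterate_add_apply]
        congr 1
        omega
    _ = g (f^[k] x) := by
        rw [Function.iterate_mul]
        exact Function.iterate_fixed hgy_fix j
end

section
/- Let X be a compact Hausdorff space, f : X → X continuous, and x ∈ X. If the orbit O_f(x) contains a point that is isolated in X, then for every free ultrafilter p on ℕ, the p-iterate f^p is continuous at x. -/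
open Filter Topology

theorem stmt_17 {X : Type*} [TopologicalSpace X] [CompactSpace X] [T2Space X]
    (f : X → X) (hf : Continuous f) (x : X)
    (hiso : ∃ k : ℕ, IsOpen ({f^[k] x} : Set X)) :
    ∀ p : Ultrafilter ℕ, (p : Filter ℕ) ≤ Filter.cofinite →
      ContinuousAt (pIter f p) x := by
  obtain ⟨k, hk⟩ := hiso
  intro p hp
  have hpat : (p : Filter ℕ) ≤ atTop := by rwa [← Nat.cofinite_eq_atTop]
  set U : Set X := f^[k] ⁻¹' {f^[k] x} with hU
  have hUopen : IsOpen U := hk.preimage (hf.iterate k)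
  have hxU : x ∈ U := rfl
  have hconst : ∀ z ∈ U, pIter f p z = pIter f p x := by
    intro z hz
    have heq : (fun n => f^[n] z) =ᶠ[(p : Filter ℕ)] fun n => f^[n] x := by
      filter_upwards [hpat (eventually_ge_atTop k)] with n hn
      obtain ⟨m, rfl⟩ := Nat.exists_eq_add_of_le hn
      rw [add_comm, Function.iterate_add_apply, Function.iterate_add_apply,
        show f^[k] z = f^[k] x from hz]
    unfold pIter
    rw [show (p.map fun n => f^[n] z) = p.map fun n => f^[n] x from
      Ultrafilter.coe_injective (Filter.map_congr heq)]
  have : pIter f p =ᶠ[𝓝 x] fun _ => pIter f p x := by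
    filter_upwards [hUopen.mem_nhds hxU] with z hz using hconst z hz
  exact (continuousAt_const).congr this.symm
end
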